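/- arXiv:2302.00854 — 4 statements merged into one kernel-verified Lean document; each statement's English description precedes it below -/
import Mathlib

section
/- Let T > 0, let 𝒢 : C([0,T]; L²(𝕋;ℂ)) → C([0,T]; L²(𝕋;ℂ)) be a continuous operator and let K ⊆ C([0,T]; L²(𝕋;ℂ)) be a compact subset. Then for every ε > 0 there exists N ∈ ℕ such that for all a ∈ K and all t ∈ [0,T], ‖𝒢(a)(t) − P_N(𝒢(P_N ∘ a)(t))‖_{L²} < ε, where P_N ∘ a denotes the continuous path t ↦ P_N(a(t)). -/
open MeasureTheory Real Filter

noncomputable section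

instance : Fact (0 < 2 * π) := ⟨by positivity⟩

/-- The one-dimensional torus `𝕋 = ℝ/2πℤ`. -/
abbrev 𝕋 : Type := AddCircle (2 * π)

/-- `L²(𝕋; ℂ)` with respect to the normalized Haar measure. -/
abbrev L2T : Type := Lp ℂ 2 (@AddCircle.haarAddCircle (2 * π) _)

/-- The Fourier truncation `P_N f = ∑_{|n| ≤ N} f̂(n) e_n`. -/
def fourierTrunc (N : ℕ) (f : L2T) : L2T :=
  ∑ n ∈ Finset.Icc (-(N : ℤ)) (N : ℤ), fourierCoeff (f : 𝕋 → ℂ) n • fourierLp 2 n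


lemma fourierTrunc_continuous (N : ℕ) : Continuous (fourierTrunc N) := by
  refine continuous_finsetSum _ fun n _ => Continuous.smul
    (f := fun f : L2T => fourierCoeff (f : 𝕋 → ℂ) n) (g := fun _ : L2T => fourierLp 2 n)
    ?_ continuous_const
  have h : (fun f : L2T => fourierCoeff (f : 𝕋 → ℂ) n)
      = fun f : L2T => @inner ℂ _ _ ((@fourierBasis (2 * π) _) n) f := by
    funext f
    rw [← fourierBasis_repr, HilbertBasis.repr_apply_apply]
  rw [h]
  exact Continuous.inner continuous_const continuous_id

lemma fourierTrunc_eq (N : ℕ) (f : L2T) :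
    fourierTrunc N f = ∑ n ∈ Finset.Icc (-(N : ℤ)) (N : ℤ),
      (@inner ℂ _ _ ((@fourierBasis (2 * π) _) n) f) • (@fourierBasis (2 * π) _) n := by
  unfold fourierTrunc
  refine Finset.sum_congr rfl fun n _ => ?_
  rw [← fourierBasis_repr, HilbertBasis.repr_apply_apply, coe_fourierBasis]

lemma fourierTrunc_sub (N : ℕ) (f g : L2T) :
    fourierTrunc N (f - g) = fourierTrunc N f - fourierTrunc N g := by
  simp_rw [fourierTrunc_eq, inner_sub_right, sub_smul, Finset.sum_sub_distrib]

lemma fourierTrunc_norm_le (N : ℕ) (f : L2T) : ‖fourierTrunc N f‖ ≤ ‖f‖ := by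
  have hon : Orthonormal ℂ (@fourierBasis (2 * π) _) := (@fourierBasis (2 * π) _).orthonormal
  rw [fourierTrunc_eq]
  have h1 : ‖∑ n ∈ Finset.Icc (-(N : ℤ)) (N : ℤ),
      (@inner ℂ _ _ ((@fourierBasis (2 * π) _) n) f) • (@fourierBasis (2 * π) _) n‖ ^ 2
      = ∑ n ∈ Finset.Icc (-(N : ℤ)) (N : ℤ),
        ‖(@inner ℂ _ _ ((@fourierBasis (2 * π) _) n) f)‖ ^ 2 := by
    rw [@norm_sq_eq_re_inner ℂ, hon.inner_sum, map_sum]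
    refine Finset.sum_congr rfl fun n _ => ?_
    rw [RCLike.conj_mul]
    norm_cast
  have h2 := hon.sum_inner_products_le (s := Finset.Icc (-(N : ℤ)) (N : ℤ)) f
  have h3 := h1.trans_le h2
  exact (pow_le_pow_iff_left₀ (norm_nonneg _) (norm_nonneg f) two_ne_zero).mp h3

lemma fourierTrunc_dist_le (N : ℕ) (f g : L2T) :
    dist (fourierTrunc N f) (fourierTrunc N g) ≤ dist f g := by
  rw [dist_eq_norm, dist_eq_norm, ← fourierTrunc_sub]
  exact fourierTrunc_norm_le N (f - g)

lemma fourierTrunc_tendsto (f : L2T) :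
    Tendsto (fun N => fourierTrunc N f) atTop (nhds f) := by
  have hs := hasSum_fourier_series_L2 (T := 2 * π) f
  have hIcc : Tendsto (fun N : ℕ => Finset.Icc (-(N : ℤ)) (N : ℤ)) atTop atTop := by
    apply tendsto_atTop_finset_of_monotone
    · intro m n h
      exact Finset.Icc_subset_Icc (by exact_mod_cast neg_le_neg (Int.ofNat_le.2 h))
        (by exact_mod_cast Int.ofNat_le.2 h)
    · intro x
      exact ⟨x.natAbs, Finset.mem_Icc.2 (by omega)⟩
  exact hs.comp hIcc


set_option synthInstance.maxHeartbeats 1000000 in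
lemma evalCont (T : ℝ) :
    Continuous fun p : C(Set.Icc (0 : ℝ) T, L2T) × Set.Icc (0 : ℝ) T => p.1 p.2 :=
  continuous_eval

lemma fourierTrunc_unif_on_compact {S : Set L2T} (hS : IsCompact S) {η : ℝ} (hη : 0 < η) :
    ∀ᶠ N in atTop, ∀ f ∈ S, dist (fourierTrunc N f) f < η := by
  obtain ⟨t, htfin, hcov⟩ := Metric.totallyBounded_iff.mp hS.totallyBounded (η / 3) (by positivity)
  have hev : ∀ᶠ N in atTop, ∀ y ∈ t, dist (fourierTrunc N y) y < η / 3 :=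
    htfin.eventually_all.mpr fun y _ =>
      Metric.tendsto_nhds.mp (fourierTrunc_tendsto y) (η / 3) (by positivity)
  filter_upwards [hev] with N hN f hf
  obtain ⟨y, hy, hfy⟩ := Set.mem_iUnion₂.mp (hcov hf)
  have h1 : dist f y < η / 3 := Metric.mem_ball.1 hfy
  have h2 := fourierTrunc_dist_le N f y
  have h3 := hN y hy
  have := dist_triangle4 (fourierTrunc N f) (fourierTrunc N y) y f
  rw [dist_comm y f] at this
  linarith

theorem fourier_truncation_approx_paths (T : ℝ) (hT : 0 < T)
    (𝒢 : C(Set.Icc (0 : ℝ) T, L2T) → C(Set.Icc (0 : ℝ) T, L2T)) (h𝒢 : Continuous 𝒢)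
    (K : Set C(Set.Icc (0 : ℝ) T, L2T)) (hK : IsCompact K) (ε : ℝ) (hε : 0 < ε) :
    ∃ N : ℕ, ∀ a ∈ K, ∀ t : Set.Icc (0 : ℝ) T,
      ‖𝒢 a t - fourierTrunc N
        (𝒢 (ContinuousMap.mk (fun s => fourierTrunc N (a s))
              ((fourierTrunc_continuous N).comp a.continuous)) t)‖ < ε := by
  classical
  let I := Set.Icc (0 : ℝ) T
  let F : ℕ → C(I, L2T) → C(I, L2T) := fun N a =>
    ContinuousMap.mk (fun s => fourierTrunc N (a s))
      ((fourierTrunc_continuous N).comp a.continuous)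
  have hFdist : ∀ N (a b : C(I, L2T)), dist (F N a) (F N b) ≤ dist a b := fun N a b =>
    (ContinuousMap.dist_le dist_nonneg).2 fun s =>
      (fourierTrunc_dist_le N _ _).trans (ContinuousMap.dist_apply_le_dist s)
  have hFcont : ∀ N, Continuous (F N) := fun N =>
    (LipschitzWith.of_dist_le_mul (K := 1) fun a b => by
      simpa using hFdist N a b).continuous
  -- compact set of values of paths in K
  have hEvalCont : Continuous fun p : C(I, L2T) × I => p.1 p.2 := evalCont T
  let E : Set L2T := (fun p : C(I, L2T) × I => p.1 p.2) '' (K ×ˢ Set.univ)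
  have hE : IsCompact E := ((hK.prod isCompact_univ).image hEvalCont)
  have hmemE : ∀ a ∈ K, ∀ t : I, a t ∈ E := fun a ha t =>
    ⟨(a, t), Set.mk_mem_prod ha (Set.mem_univ t), rfl⟩
  -- compact set of values of 𝒢-images of K
  let E2 : Set L2T := (fun p : C(I, L2T) × I => p.1 p.2) '' ((𝒢 '' K) ×ˢ Set.univ)
  have hE2 : IsCompact E2 := (((hK.image h𝒢).prod isCompact_univ).image hEvalCont)
  have hmemE2 : ∀ a ∈ K, ∀ t : I, 𝒢 a t ∈ E2 := fun a ha t =>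
    ⟨(𝒢 a, t), Set.mk_mem_prod (Set.mem_image_of_mem 𝒢 ha) (Set.mem_univ t), rfl⟩
  -- the orbit set S
  let S : Set C(I, L2T) := K ∪ ⋃ N, F N '' K
  have hFK : ∀ {η : ℝ}, 0 < η → ∀ᶠ N in atTop, ∀ a ∈ K, dist (F N a) a ≤ η := by
    intro η hη
    filter_upwards [fourierTrunc_unif_on_compact hE hη] with N hN a ha
    exact (ContinuousMap.dist_le hη.le).2 fun s => (hN (a s) (hmemE a ha s)).le
  have hSb : TotallyBounded S := by
    rw [Metric.totallyBounded_iff]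
    intro η hη
    obtain ⟨N₀, hN₀⟩ := eventually_atTop.mp (hFK (show (0:ℝ) < η / 3 by positivity))
    have hC : IsCompact (K ∪ ⋃ N ∈ Set.Iio N₀, F N '' K) :=
      hK.union ((Set.finite_Iio N₀).isCompact_biUnion fun N _ => hK.image (hFcont N))
    obtain ⟨t, htfin, htcov⟩ :=
      Metric.totallyBounded_iff.mp hC.totallyBounded (η / 2) (by positivity)
    refine ⟨t, htfin, ?_⟩
    have hmem : ∀ z ∈ K ∪ ⋃ N ∈ Set.Iio N₀, F N '' K, z ∈ ⋃ y ∈ t, Metric.ball y η := by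
      intro z hz
      obtain ⟨y, hy, hzy⟩ := Set.mem_iUnion₂.mp (htcov hz)
      exact Set.mem_iUnion₂.2 ⟨y, hy, Metric.mem_ball.2
        (lt_trans (Metric.mem_ball.1 hzy) (by linarith))⟩
    rintro x (hx | hx)
    · exact hmem x (Or.inl hx)
    · obtain ⟨_, ⟨N, rfl⟩, a, ha, rfl⟩ := hx
      by_cases hN : N < N₀
      · exact hmem _ (Or.inr (Set.mem_biUnion hN ⟨a, ha, rfl⟩))
      · have h1 : dist (F N a) a ≤ η / 3 := hN₀ N (le_of_not_gt hN) a ha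
        obtain ⟨y, hy, hay⟩ := Set.mem_iUnion₂.mp (htcov (Or.inl ha))
        have h2 : dist a y < η / 2 := Metric.mem_ball.1 hay
        have h3 := dist_triangle (F N a) a y
        exact Set.mem_iUnion₂.2 ⟨y, hy, Metric.mem_ball.2 (by linarith)⟩
  have hL : IsCompact (closure S) :=
    TotallyBounded.isCompact_of_isClosed hSb.closure isClosed_closure
  obtain ⟨δ, hδ, hδ'⟩ := Metric.uniformContinuousOn_iff.mp
    (hL.uniformContinuousOn_of_continuous h𝒢.continuousOn) (ε / 2) (by positivity)
  obtain ⟨N, hN2, hN3⟩ :=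
    ((fourierTrunc_unif_on_compact hE2 (show (0:ℝ) < ε / 2 by positivity)).and
      (hFK (show (0:ℝ) < δ / 2 by positivity))).exists
  refine ⟨N, fun a ha t => ?_⟩
  have haS : a ∈ closure S := subset_closure (Or.inl ha)
  have hbS : F N a ∈ closure S :=
    subset_closure (Or.inr (Set.mem_iUnion.2 ⟨N, ⟨a, ha, rfl⟩⟩))
  have hdab : dist a (F N a) < δ := by
    have := hN3 a ha
    rw [dist_comm] at this
    linarith
  have hG : dist (𝒢 a) (𝒢 (F N a)) < ε / 2 := hδ' a haS (F N a) hbS hdab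
  have hterm1 : dist (fourierTrunc N (𝒢 a t)) (𝒢 a t) < ε / 2 := hN2 (𝒢 a t) (hmemE2 a ha t)
  have hterm2 : dist (fourierTrunc N (𝒢 a t)) (fourierTrunc N (𝒢 (F N a) t)) ≤
      dist (𝒢 a t) (𝒢 (F N a) t) := fourierTrunc_dist_le N _ _
  have hterm3 : dist (𝒢 a t) (𝒢 (F N a) t) ≤ dist (𝒢 a) (𝒢 (F N a)) :=
    ContinuousMap.dist_apply_le_dist t
  show ‖𝒢 a t - fourierTrunc N (𝒢 (F N a) t)‖ < ε
  rw [← dist_eq_norm]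
  have h4 := dist_triangle (𝒢 a t) (fourierTrunc N (𝒢 a t)) (fourierTrunc N (𝒢 (F N a) t))
  rw [dist_comm (𝒢 a t) (fourierTrunc N (𝒢 a t))] at h4
  linarith
end
end

section
/- Let σ : ℝ → ℝ be sigmoidal, let T > 0, d_x, d_y ∈ ℕ, let f : [0,T] × ℝ^{d_x} → ℝ^{d_y} be a continuous function and K ⊆ ℝ^{d_x} a compact subset. Then for every ε > 0 there exist n₁, n₂ ∈ ℕ, matrices W₁ ∈ ℝ^{n₁×d_x}, W₂ ∈ ℝ^{n₂×n₁}, Q ∈ ℝ^{d_y×n₂}, vectors b₁ ∈ ℝ^{n₁}, b₂ ∈ ℝ^{n₂}, and continuous maps ψ_{w,1}, ψ_{b,1} : [0,T] → ℝ^{n₁} and ψ_{w,2}, ψ_{b,2} : [0,T] → ℝ^{n₂}, such that for all t ∈ [0,T] and all x ∈ K, ‖Q · σ( ψ_{w,2}(t) ⊙ (W₂ · σ( ψ_{w,1}(t) ⊙ (W₁ x) + ψ_{b,1}(t) ⊙ b₁ )) + ψ_{b,2}(t) ⊙ b₂ ) − f(t,x)‖ < ε (Euclidean norm on ℝ^{d_y}).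 -/
open Filter Finset

lemma sig_tail {σ : ℝ → ℝ} (h1 : Tendsto σ atTop (nhds 1)) (h0 : Tendsto σ atBot (nhds 0))
    (η : ℝ) (hη : 0 < η) :
    ∃ R : ℝ, 0 < R ∧ (∀ u, R ≤ u → |σ u - 1| ≤ η) ∧ (∀ u, u ≤ -R → |σ u| ≤ η) := by
  obtain ⟨R1, hR1⟩ := Metric.tendsto_atTop.mp h1 η hη
  have h0' : Tendsto (fun u => σ (-u)) atTop (nhds 0) := h0.comp tendsto_neg_atTop_atBot
  obtain ⟨R2, hR2⟩ := Metric.tendsto_atTop.mp h0' η hη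
  refine ⟨max 1 (max R1 R2), by positivity, ?_, ?_⟩
  · intro u hu
    have := hR1 u (le_trans (le_trans (le_max_left R1 R2) (le_max_right _ _)) hu)
    rw [Real.dist_eq] at this; exact this.le
  · intro u hu
    have h : R2 ≤ -u := le_trans (le_trans (le_max_right R1 R2) (le_max_right _ _)) (by linarith)
    have := hR2 (-u) h
    simp only [neg_neg, Real.dist_eq, sub_zero] at this
    exact this.le

lemma sig_bdd {σ : ℝ → ℝ} (hc : Continuous σ) (h1 : Tendsto σ atTop (nhds 1))
    (h0 : Tendsto σ atBot (nhds 0)) : ∃ C : ℝ, 1 ≤ C ∧ ∀ u, |σ u| ≤ C := by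
  obtain ⟨R, hRpos, hRtop, hRbot⟩ := sig_tail h1 h0 1 one_pos
  obtain ⟨C, hC⟩ := IsCompact.exists_bound_of_continuousOn (isCompact_Icc (a := -R) (b := R))
    hc.continuousOn
  refine ⟨max (max C 2) 1, le_max_right _ _, fun u => ?_⟩
  rcases le_total u (-R) with h | h
  · have := hRbot u h
    calc |σ u| ≤ 1 := this
    _ ≤ _ := le_max_right _ _
  rcases le_total R u with h' | h'
  · have := hRtop u h'
    have : |σ u| ≤ 2 := by
      have h2 : |σ u| - |(1:ℝ)| ≤ |σ u - 1| := by
        have := abs_sub_abs_le_abs_sub (σ u) 1; simpa using this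
      simp only [abs_one] at h2; linarith
    calc |σ u| ≤ 2 := this
    _ ≤ max C 2 := le_max_right _ _
    _ ≤ _ := le_max_left _ _
  · have := hC u ⟨h, h'⟩
    rw [Real.norm_eq_abs] at this
    calc |σ u| ≤ C := this
    _ ≤ max C 2 := le_max_left _ _
    _ ≤ _ := le_max_left _ _

set_option maxHeartbeats 1000000 in
lemma step_one_dim {σ : ℝ → ℝ} (hc : Continuous σ) (h1 : Tendsto σ atTop (nhds 1))
    (h0 : Tendsto σ atBot (nhds 0)) (g : ℝ → ℝ) (hg : Continuous g)
    (a b ε : ℝ) (hε : 0 < ε) :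
    ∃ (n : ℕ) (c w d : ℕ → ℝ),
      ∀ s ∈ Set.Icc a b, |(∑ i ∈ Finset.range n, c i * σ (w i * s + d i)) - g s| < ε := by
  -- reduce to the case of a nondegenerate interval
  suffices H : ∃ (n : ℕ) (c w d : ℕ → ℝ),
      ∀ s ∈ Set.Icc a (max b (a+1)), |(∑ i ∈ Finset.range n, c i * σ (w i * s + d i)) - g s| < ε by
    obtain ⟨n, c, w, d, h⟩ := H
    exact ⟨n, c, w, d, fun s hs => h s ⟨hs.1, le_trans hs.2 (le_max_left _ _)⟩⟩
  set b' : ℝ := max b (a+1) with hb'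
  have hab : a < b' := lt_of_lt_of_le (by linarith) (le_max_right _ _)
  obtain ⟨C, hC1, hC⟩ := sig_bdd hc h1 h0
  have hCpos : 0 < C + 2 := by linarith
  set ε₁ : ℝ := ε / (2*(C+2)) with hε₁def
  have hε₁ : 0 < ε₁ := by positivity
  obtain ⟨δ₀, hδ₀pos, hδ₀⟩ := Metric.uniformContinuousOn_iff.mp
    ((isCompact_Icc (a := a) (b := b')).uniformContinuousOn_of_continuous hg.continuousOn) ε₁ hε₁
  have hgg : ∀ u v, u ∈ Set.Icc a b' → v ∈ Set.Icc a b' → |u - v| < δ₀ → |g u - g v| ≤ ε₁ := by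
    intro u v hu hv h
    have := hδ₀ u hu v hv (by rwa [Real.dist_eq])
    rw [Real.dist_eq] at this; exact this.le
  set N : ℕ := ⌊(b'-a)/δ₀⌋₊ + 1 with hNdef
  have hNpos : 0 < N := Nat.succ_pos _
  have hNR : (0:ℝ) < N := by exact_mod_cast hNpos
  set δ : ℝ := (b'-a)/N with hδdef
  have hδpos : 0 < δ := by apply div_pos <;> [linarith; exact hNR]
  have hδδ₀ : δ < δ₀ := by
    rw [hδdef, div_lt_iff₀ hNR]
    have h1' : (b'-a)/δ₀ < N := by
      rw [hNdef]; push_cast; exact Nat.lt_floor_add_one _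
    calc b' - a = ((b'-a)/δ₀) * δ₀ := by field_simp
    _ < N * δ₀ := mul_lt_mul_of_pos_right h1' hδ₀pos
    _ = δ₀ * N := by ring
  set η : ℝ := ε / (4*(N*ε₁+1)) with hηdef
  have hNε₁ : (0:ℝ) ≤ N * ε₁ := by positivity
  have hη : 0 < η := by apply div_pos hε <;> positivity
  obtain ⟨R, hRpos, hRtop, hRbot⟩ := sig_tail h1 h0 η hη
  set L : ℝ := 2*R/δ with hLdef
  have hLpos : 0 < L := by positivity
  have hLδ : L * (δ/2) = R := by rw [hLdef]; field_simp
  obtain ⟨D₀, hD₀⟩ := Metric.tendsto_atTop.mp h1 (1/2) (by norm_num)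
  set d₀ : ℝ := D₀ with hd₀def
  have hσd₀ : (1:ℝ)/2 < σ d₀ := by
    have := hD₀ d₀ le_rfl
    rw [Real.dist_eq, abs_sub_lt_iff] at this
    linarith [this.2]
  have hσd₀ne : σ d₀ ≠ 0 := by linarith
  set sp : ℕ → ℝ := fun i => a + i*δ with hspdef
  set mp : ℕ → ℝ := fun i => a + i*δ + δ/2 with hmpdef
  refine ⟨N+1,
    (fun i => if i < N then g (sp (i+1)) - g (sp i) else g a / σ d₀),
    (fun i => if i < N then L else 0),
    (fun i => if i < N then -(L * mp i) else d₀), ?_⟩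
  intro s hs
  set J : ℕ → ℝ := fun i => g (sp (i+1)) - g (sp i) with hJdef
  have hsum : (∑ i ∈ Finset.range (N+1),
        (if i < N then J i else g a / σ d₀) *
          σ ((if i < N then L else 0) * s + (if i < N then -(L * mp i) else d₀)))
      = (∑ i ∈ range N, J i * σ (L * (s - mp i))) + g a := by
    rw [Finset.sum_range_succ]
    simp only [lt_irrefl, if_false]
    congr 1
    · apply Finset.sum_congr rfl
      intro i hi
      rw [Finset.mem_range] at hi
      rw [if_pos hi, if_pos hi, if_pos hi]
      ring_nf
    · rw [zero_mul, zero_add]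
      field_simp
  rw [hsum]
  -- the index k
  set u : ℝ := (s - a)/δ with hudef
  have hu0 : 0 ≤ u := by apply div_nonneg _ hδpos.le; linarith [hs.1]
  have hNδ : (N:ℝ) * δ = b' - a := by rw [hδdef]; field_simp
  have huN : u ≤ N := by
    rw [hudef, div_le_iff₀ hδpos]
    calc s - a ≤ b' - a := by linarith [hs.2]
    _ = N * δ := hNδ.symm
  set k : ℕ := ⌊u⌋₊ with hkdef
  have hk_le : (k:ℝ) ≤ u := Nat.floor_le hu0
  have hu_lt : u < k + 1 := Nat.lt_floor_add_one u
  have hkN : k ≤ N := by exact_mod_cast hk_le.trans huN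
  have hkNR : (k:ℝ) ≤ N := by exact_mod_cast hkN
  have hsu : s = a + u * δ := by rw [hudef]; field_simp; ring
  have hmem : ∀ i, i ≤ N → sp i ∈ Set.Icc a b' := by
    intro i hi
    have hiR : (i:ℝ) ≤ N := by exact_mod_cast hi
    have h0' : 0 ≤ (i:ℝ) * δ := by positivity
    have h1' : (i:ℝ) * δ ≤ N * δ := mul_le_mul_of_nonneg_right hiR hδpos.le
    constructor
    · simp only [hspdef]; linarith
    · simp only [hspdef]; linarith [hNδ]
  have hjump : ∀ i, i < N → |J i| ≤ ε₁ := by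
    intro i hi
    apply hgg _ _ (hmem (i+1) hi) (hmem i (le_of_lt hi))
    have : sp (i+1) - sp i = δ := by simp only [hspdef]; push_cast; ring
    rw [this]; rwa [abs_of_pos hδpos]
  have hfar1 : ∀ i, i < k → |σ (L * (s - mp i)) - 1| ≤ η := by
    intro i hi
    apply hRtop
    have hiR : (i:ℝ) ≤ (k:ℝ) - 1 := by
      have : (i:ℝ) + 1 ≤ k := by exact_mod_cast hi
      linarith
    have hsm : s - mp i = (u - i - 1/2) * δ := by
      rw [hsu]; simp only [hmpdef]; ring
    have h12 : (1:ℝ)/2 ≤ u - i - 1/2 := by linarith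
    calc R = L * (δ/2) := hLδ.symm
    _ ≤ L * ((u - i - 1/2) * δ) := by
        apply mul_le_mul_of_nonneg_left _ hLpos.le
        nlinarith
    _ = L * (s - mp i) := by rw [hsm]
  have hfar2 : ∀ i, k + 1 ≤ i → |σ (L * (s - mp i))| ≤ η := by
    intro i hi
    apply hRbot
    have hiR : (k:ℝ) + 1 ≤ i := by exact_mod_cast hi
    have hsm : s - mp i = (u - i - 1/2) * δ := by
      rw [hsu]; simp only [hmpdef]; ring
    have h12 : u - i - 1/2 ≤ -(1/2) := by linarith
    have : L * (s - mp i) ≤ L * (-(1/2) * δ) := by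
      rw [hsm]
      apply mul_le_mul_of_nonneg_left _ hLpos.le
      nlinarith
    calc L * (s - mp i) ≤ L * (-(1/2) * δ) := this
    _ = -(L * (δ/2)) := by ring
    _ = -R := by rw [hLδ]
  have htel : ∑ i ∈ range k, J i = g (sp k) - g (sp 0) := Finset.sum_range_sub (fun i => g (sp i)) k
  have hsp0 : sp 0 = a := by simp [hspdef]
  have hsplit : ∑ i ∈ range N, J i * σ (L * (s - mp i))
      = ∑ i ∈ range k, J i * σ (L * (s - mp i)) + ∑ i ∈ Ico k N, J i * σ (L * (s - mp i)) :=
    (Finset.sum_range_add_sum_Ico _ hkN).symm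
  have hE : (∑ i ∈ range N, J i * σ (L * (s - mp i))) + g a - g s
      = (∑ i ∈ range k, J i * (σ (L * (s - mp i)) - 1))
        + (∑ i ∈ Ico k N, J i * σ (L * (s - mp i))) + (g (sp k) - g s) := by
    rw [hsplit]
    have h2 : ∑ i ∈ range k, J i * (σ (L * (s - mp i)) - 1)
        = ∑ i ∈ range k, J i * σ (L * (s - mp i)) - ∑ i ∈ range k, J i := by
      rw [← Finset.sum_sub_distrib]; apply Finset.sum_congr rfl; intro i _; ring
    rw [h2, htel, hsp0]; ring
  -- bounds
  have B1 : |∑ i ∈ range k, J i * (σ (L * (s - mp i)) - 1)| ≤ N * (ε₁ * η) := by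
    calc |∑ i ∈ range k, J i * (σ (L * (s - mp i)) - 1)|
        ≤ ∑ i ∈ range k, |J i * (σ (L * (s - mp i)) - 1)| := Finset.abs_sum_le_sum_abs _ _
    _ ≤ ∑ i ∈ range k, ε₁ * η := by
        apply Finset.sum_le_sum
        intro i hi
        rw [Finset.mem_range] at hi
        rw [abs_mul]
        exact mul_le_mul (hjump i (lt_of_lt_of_le hi hkN)) (hfar1 i hi) (abs_nonneg _) hε₁.le
    _ = k * (ε₁ * η) := by rw [Finset.sum_const, Finset.card_range]; simp [nsmul_eq_mul]
    _ ≤ N * (ε₁ * η) := by apply mul_le_mul_of_nonneg_right hkNR; positivity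
  have B2 : |∑ i ∈ Ico k N, J i * σ (L * (s - mp i))| ≤ ε₁ * C + N * (ε₁ * η) := by
    rcases lt_or_ge k N with hkN' | hkN'
    · rw [Finset.sum_eq_sum_Ico_succ_bot hkN']
      have hhead : |J k * σ (L * (s - mp k))| ≤ ε₁ * C := by
        rw [abs_mul]
        exact mul_le_mul (hjump k hkN') (hC _) (abs_nonneg _) hε₁.le
      have htail : |∑ i ∈ Ico (k+1) N, J i * σ (L * (s - mp i))| ≤ N * (ε₁ * η) := by
        calc |∑ i ∈ Ico (k+1) N, J i * σ (L * (s - mp i))|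
            ≤ ∑ i ∈ Ico (k+1) N, |J i * σ (L * (s - mp i))| := Finset.abs_sum_le_sum_abs _ _
        _ ≤ ∑ i ∈ Ico (k+1) N, ε₁ * η := by
            apply Finset.sum_le_sum
            intro i hi
            rw [Finset.mem_Ico] at hi
            rw [abs_mul]
            exact mul_le_mul (hjump i hi.2) (hfar2 i hi.1) (abs_nonneg _) hε₁.le
        _ = ((Finset.Ico (k+1) N).card : ℝ) * (ε₁ * η) := by rw [Finset.sum_const, nsmul_eq_mul]
        _ ≤ N * (ε₁ * η) := by
            apply mul_le_mul_of_nonneg_right _ (by positivity)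
            rw [Nat.card_Ico]
            exact_mod_cast Nat.sub_le N (k+1)
      calc |J k * σ (L * (s - mp k)) + ∑ i ∈ Ico (k+1) N, J i * σ (L * (s - mp i))|
          ≤ |J k * σ (L * (s - mp k))| + |∑ i ∈ Ico (k+1) N, J i * σ (L * (s - mp i))| := abs_add_le _ _
      _ ≤ ε₁ * C + N * (ε₁ * η) := add_le_add hhead htail
    · have : k = N := le_antisymm hkN hkN'
      rw [this, Finset.Ico_self, Finset.sum_empty, abs_zero]
      positivity
  have B3 : |g (sp k) - g s| ≤ ε₁ := by
    apply hgg _ _ (hmem k hkN) ⟨hs.1, hs.2⟩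
    have : sp k - s = -((u - k) * δ) := by rw [hsu]; simp only [hspdef]; ring
    rw [this, abs_neg]
    rw [abs_of_nonneg (by nlinarith)]
    calc (u - k) * δ < 1 * δ := by nlinarith
    _ = δ := one_mul δ
    _ < δ₀ := hδδ₀
  -- conclude
  set S1 : ℝ := ∑ i ∈ range k, J i * (σ (L * (s - mp i)) - 1) with hS1
  set S2 : ℝ := ∑ i ∈ Ico k N, J i * σ (L * (s - mp i)) with hS2
  have hEb : |(∑ i ∈ range N, J i * σ (L * (s - mp i))) + g a - g s|
      ≤ N * (ε₁ * η) + (ε₁ * C + N * (ε₁ * η)) + ε₁ := by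
    rw [hE]
    have t1 : |S1 + S2 + (g (sp k) - g s)| ≤ |S1| + |S2| + |g (sp k) - g s| :=
      le_trans (abs_add_le _ _) (by gcongr; exact abs_add_le _ _)
    calc |S1 + S2 + (g (sp k) - g s)| ≤ |S1| + |S2| + |g (sp k) - g s| := t1
    _ ≤ N * (ε₁ * η) + (ε₁ * C + N * (ε₁ * η)) + ε₁ := by gcongr
  have hnum1 : ε₁ * C + ε₁ < ε / 2 := by
    have h' : ε₁ * (C + 2) = ε / 2 := by rw [hε₁def]; field_simp
    nlinarith
  have hnum2 : N * (ε₁ * η) + N * (ε₁ * η) ≤ ε / 2 := by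
    set A : ℝ := (N:ℝ) * ε₁ with hA
    have hA0 : 0 ≤ A := hNε₁
    have h' : N * (ε₁ * η) = A * η := by ring
    rw [h', hηdef]
    have h'' : A * (ε / (4 * (A + 1))) ≤ ε / 4 := by
      rw [← mul_div_assoc, div_le_div_iff₀ (by positivity) (by norm_num : (0:ℝ) < 4)]
      nlinarith
    linarith
  calc |(∑ i ∈ range N, J i * σ (L * (s - mp i))) + g a - g s|
      ≤ N * (ε₁ * η) + (ε₁ * C + N * (ε₁ * η)) + ε₁ := hEb
  _ = (ε₁ * C + ε₁) + (N * (ε₁ * η) + N * (ε₁ * η)) := by ring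
  _ < ε / 2 + ε / 2 := by
      apply add_lt_add_of_lt_of_le hnum1 hnum2
  _ = ε := by ring

set_option maxHeartbeats 1000000 in
lemma step_multi {σ : ℝ → ℝ} (hc : Continuous σ) (h1 : Tendsto σ atTop (nhds 1))
    (h0 : Tendsto σ atBot (nhds 0))
    (T : ℝ) (dx dy : ℕ)
    (f : Set.Icc (0:ℝ) T → EuclideanSpace ℝ (Fin dx) → EuclideanSpace ℝ (Fin dy))
    (hf : Continuous fun p : Set.Icc (0:ℝ) T × EuclideanSpace ℝ (Fin dx) => f p.1 p.2)
    (K : Set (EuclideanSpace ℝ (Fin dx))) (hK : IsCompact K)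
    (ε' : ℝ) (hε' : 0 < ε') :
    ∃ (m : ℕ) (c α d : Fin dy → ℕ → ℝ) (w : Fin dy → ℕ → Fin dx → ℝ),
      ∀ (t : Set.Icc (0:ℝ) T), ∀ x (hx : x ∈ K), ∀ l : Fin dy,
        |(∑ j ∈ Finset.range m, c l j * σ (α l j * (t:ℝ) + (∑ i, w l j i * x i) + d l j))
          - f t x l| < ε' := by
  haveI : CompactSpace (Set.Icc (0:ℝ) T) := isCompact_iff_compactSpace.mp isCompact_Icc
  haveI : CompactSpace K := isCompact_iff_compactSpace.mp hK
  -- the compact product space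
  set X := (Set.Icc (0:ℝ) T) × K with hX
  have hcoord : ∀ i : Fin dx, Continuous (fun q : X => ((q.2 : EuclideanSpace ℝ (Fin dx)) i)) :=
    fun i => ((continuous_apply i).comp (PiLp.continuous_ofLp 2 (fun _ : Fin dx => ℝ))).comp
      (continuous_subtype_val.comp continuous_snd)
  have ht_cont : Continuous (fun q : X => ((q.1 : ℝ))) :=
    continuous_subtype_val.comp continuous_fst
  -- exponential units
  have hEcont : ∀ p : ℝ × (Fin dx → ℝ), Continuous (fun q : X =>
      Real.exp (p.1 * (q.1 : ℝ) + ∑ i, p.2 i * (q.2 : EuclideanSpace ℝ (Fin dx)) i)) := by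
    intro p
    apply Real.continuous_exp.comp
    exact ((continuous_const.mul ht_cont).add
      (continuous_finset_sum _ (fun i _ => continuous_const.mul (hcoord i))))
  let Efun : ℝ × (Fin dx → ℝ) → C(X, ℝ) := fun p =>
    ⟨fun q => Real.exp (p.1 * (q.1 : ℝ) + ∑ i, p.2 i * (q.2 : EuclideanSpace ℝ (Fin dx)) i),
      hEcont p⟩
  -- network units
  have hNcont : ∀ (a : ℝ) (w : Fin dx → ℝ) (d : ℝ), Continuous (fun q : X =>
      σ (a * (q.1 : ℝ) + (∑ i, w i * (q.2 : EuclideanSpace ℝ (Fin dx)) i) + d)) := by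
    intro a w d
    apply hc.comp
    exact (((continuous_const.mul ht_cont).add
      (continuous_finset_sum _ (fun i _ => continuous_const.mul (hcoord i)))).add continuous_const)
  let net : ℝ → (Fin dx → ℝ) → ℝ → C(X, ℝ) := fun a w d =>
    ⟨fun q => σ (a * (q.1 : ℝ) + (∑ i, w i * (q.2 : EuclideanSpace ℝ (Fin dx)) i) + d),
      hNcont a w d⟩
  set S : Submodule ℝ C(X, ℝ) := Submodule.span ℝ {u | ∃ a w d, u = net a w d} with hS
  -- every exponential unit is in the closure of S
  have hexp : ∀ p, Efun p ∈ closure (S : Set C(X,ℝ)) := by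
    intro p
    rw [Metric.mem_closure_iff]
    intro ε2 hε2
    obtain ⟨B, hB⟩ := IsCompact.exists_bound_of_continuousOn (isCompact_univ : IsCompact (Set.univ : Set X))
      (Continuous.continuousOn ((continuous_const.mul ht_cont).add
        (continuous_finset_sum _ (fun i _ => continuous_const.mul (hcoord i)))))
    obtain ⟨n, c, w, d, happ⟩ := step_one_dim hc h1 h0 Real.exp Real.continuous_exp
      (-B) B (ε2/2) (by positivity)
    set gapp : C(X,ℝ) := ∑ i ∈ Finset.range n,
      c i • net (w i * p.1) (fun j => w i * p.2 j) (d i) with hgapp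
    have hgS : gapp ∈ S := by
      apply Submodule.sum_mem
      intro i _
      exact Submodule.smul_mem _ _ (Submodule.subset_span ⟨_, _, _, rfl⟩)
    refine ⟨gapp, hgS, ?_⟩
    have hd : dist (Efun p) gapp ≤ ε2/2 := by
      rw [ContinuousMap.dist_le (by positivity)]
      intro q
      have hBq := hB q (Set.mem_univ q)
      rw [Real.norm_eq_abs, abs_le] at hBq
      have := happ (p.1 * (q.1:ℝ) + ∑ i, p.2 i * (q.2 : EuclideanSpace ℝ (Fin dx)) i)
        ⟨hBq.1, hBq.2⟩
      rw [Real.dist_eq]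
      have hq : gapp q = ∑ i ∈ Finset.range n,
          c i * σ (w i * (p.1 * (q.1:ℝ) + ∑ j, p.2 j * (q.2 : EuclideanSpace ℝ (Fin dx)) j) + d i) := by
        rw [hgapp]
        simp only [ContinuousMap.coe_sum, Finset.sum_apply, ContinuousMap.coe_smul,
          Pi.smul_apply, smul_eq_mul]
        apply Finset.sum_congr rfl
        intro i _
        have harg : w i * p.1 * (q.1:ℝ) + (∑ x, w i * p.2 x * (q.2 : EuclideanSpace ℝ (Fin dx)) x) + d i
            = w i * (p.1 * (q.1:ℝ) + ∑ x, p.2 x * (q.2 : EuclideanSpace ℝ (Fin dx)) x) + d i := by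
          simp_rw [mul_assoc]
          rw [← Finset.mul_sum, ← mul_add]
        simp only [net, ContinuousMap.coe_mk]
        rw [harg]
      rw [hq]
      rw [abs_sub_comm]
      exact (le_of_lt this)
    linarith [hd, hε2]
  -- the exponentials form a submonoid
  let M : Submonoid C(X,ℝ) :=
    { carrier := Set.range Efun
      one_mem' := ⟨(0, 0), by ext q; simp [Efun]⟩
      mul_mem' := by
        rintro u v ⟨p, rfl⟩ ⟨p', rfl⟩
        refine ⟨(p.1 + p'.1, p.2 + p'.2), ?_⟩
        ext q
        simp only [Efun, ContinuousMap.coe_mk, ContinuousMap.mul_apply]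
        rw [← Real.exp_add]
        congr 1
        simp only [Pi.add_apply, add_mul]
        rw [Finset.sum_add_distrib]
        ring }
  let A : Subalgebra ℝ C(X,ℝ) := Algebra.adjoin ℝ (Set.range Efun)
  have hAsep : A.SeparatesPoints := by
    intro q1 q2 hne
    by_cases hts : q1.1 = q2.1
    · -- second coordinates differ
      have hxs : q1.2 ≠ q2.2 := fun h => hne (Prod.ext hts h)
      have hxs' : (q1.2 : EuclideanSpace ℝ (Fin dx)) ≠ (q2.2 : EuclideanSpace ℝ (Fin dx)) :=
        fun h => hxs (Subtype.ext h)
      have : ∃ i₀, (q1.2 : EuclideanSpace ℝ (Fin dx)) i₀ ≠ (q2.2 : EuclideanSpace ℝ (Fin dx)) i₀ := by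
        by_contra hcon
        push_neg at hcon
        exact hxs' (PiLp.ext hcon)
      obtain ⟨i₀, hi₀⟩ := this
      refine ⟨Efun (0, fun i => if i = i₀ then 1 else 0), ⟨_, Algebra.subset_adjoin ⟨_, rfl⟩, rfl⟩, ?_⟩
      simp only [Efun, ContinuousMap.coe_mk, zero_mul, zero_add, ite_mul, one_mul, zero_mul]
      rw [Finset.sum_ite_eq' Finset.univ i₀, Finset.sum_ite_eq' Finset.univ i₀]
      simp only [Finset.mem_univ, if_true]
      exact fun h => hi₀ (Real.exp_injective h)
    · refine ⟨Efun (1, 0), ⟨_, Algebra.subset_adjoin ⟨_, rfl⟩, rfl⟩, ?_⟩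
      simp only [Efun, ContinuousMap.coe_mk, one_mul, Pi.zero_apply, zero_mul,
        Finset.sum_const_zero, add_zero]
      intro h
      exact hts (Subtype.ext (Real.exp_injective h))
  have hAdense := ContinuousMap.subalgebra_topologicalClosure_eq_top_of_separatesPoints A hAsep
  -- S is dense
  have hSdense : closure (S : Set C(X,ℝ)) = Set.univ := by
    have hA_span : Subalgebra.toSubmodule A = Submodule.span ℝ (Set.range Efun) := by
      rw [Algebra.adjoin_eq_span]
      congr 1
      rw [show Set.range Efun = (M : Set C(X,ℝ)) from rfl, Submonoid.closure_eq]
    have hspan_le : Submodule.span ℝ (Set.range Efun) ≤ S.topologicalClosure := by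
      rw [Submodule.span_le]
      rintro u ⟨p, rfl⟩
      show Efun p ∈ (S.topologicalClosure : Set C(X,ℝ))
      rw [Submodule.topologicalClosure_coe]
      exact hexp p
    have hA_sub : (A : Set C(X,ℝ)) ⊆ closure (S : Set C(X,ℝ)) := by
      intro g hg
      have hg' : g ∈ Submodule.span ℝ (Set.range Efun) := by
        rw [← hA_span]; exact hg
      have := hspan_le hg'
      rwa [← Submodule.topologicalClosure_coe]
    have h1' : closure (A : Set C(X,ℝ)) = Set.univ := by
      rw [← Subalgebra.topologicalClosure_coe, hAdense]
      rfl
    apply Set.eq_univ_of_univ_subset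
    calc (Set.univ : Set C(X,ℝ)) = closure (A : Set C(X,ℝ)) := h1'.symm
    _ ⊆ closure (closure (S : Set C(X,ℝ))) := closure_mono hA_sub
    _ = closure (S : Set C(X,ℝ)) := closure_closure
  -- extract component networks
  have hfl : ∀ l : Fin dy, ∃ (n : ℕ) (coef a d' : Fin n → ℝ) (w' : Fin n → Fin dx → ℝ),
      ∀ q : X, |(∑ i, coef i * σ (a i * (q.1:ℝ)
          + (∑ j, w' i j * (q.2 : EuclideanSpace ℝ (Fin dx)) j) + d' i))
        - f q.1 (q.2 : EuclideanSpace ℝ (Fin dx)) l| < ε' := by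
    intro l
    have hflcont : Continuous (fun q : X => f q.1 (q.2 : EuclideanSpace ℝ (Fin dx)) l) := by
      have h' : Continuous (fun q : X => f q.1 (q.2 : EuclideanSpace ℝ (Fin dx))) :=
        hf.comp (continuous_fst.prodMk (continuous_subtype_val.comp continuous_snd))
      exact ((continuous_apply l).comp (PiLp.continuous_ofLp 2 (fun _ : Fin dy => ℝ))).comp h'
    set flC : C(X, ℝ) := ⟨_, hflcont⟩ with hflC
    have hmemcl : flC ∈ closure (S : Set C(X,ℝ)) := hSdense ▸ Set.mem_univ flC
    rw [Metric.mem_closure_iff] at hmemcl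
    obtain ⟨gl, hglS, hgl⟩ := hmemcl ε' hε'
    have hglS' : gl ∈ Submodule.span ℝ {u | ∃ a w d, u = net a w d} := hglS
    rw [Submodule.mem_span_set'] at hglS'
    obtain ⟨n, coef, vs, hsumrep⟩ := hglS'
    choose aa ww dd hvs using fun i => (vs i).2
    refine ⟨n, coef, aa, dd, ww, ?_⟩
    intro q
    have hgq : gl q = ∑ i, coef i * σ (aa i * (q.1:ℝ)
        + (∑ j, ww i j * (q.2 : EuclideanSpace ℝ (Fin dx)) j) + dd i) := by
      rw [← hsumrep]
      simp only [ContinuousMap.coe_sum, Finset.sum_apply, ContinuousMap.coe_smul,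
        Pi.smul_apply, smul_eq_mul]
      apply Finset.sum_congr rfl
      intro i _
      rw [hvs i]
      rfl
    calc |(∑ i, coef i * σ (aa i * (q.1:ℝ)
          + (∑ j, ww i j * (q.2 : EuclideanSpace ℝ (Fin dx)) j) + dd i))
        - f q.1 (q.2 : EuclideanSpace ℝ (Fin dx)) l|
        = dist (flC q) (gl q) := by rw [dist_comm, Real.dist_eq, hgq]; rfl
    _ ≤ dist flC gl := ContinuousMap.dist_apply_le_dist q
    _ < ε' := hgl
  choose nn coef aa dd ww hnet using hfl
  set m : ℕ := Finset.univ.sup nn with hm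
  have hmle : ∀ l, nn l ≤ m := fun l => Finset.le_sup (Finset.mem_univ l)
  refine ⟨m,
    (fun l j => if h : j < nn l then coef l ⟨j, h⟩ else 0),
    (fun l j => if h : j < nn l then aa l ⟨j, h⟩ else 0),
    (fun l j => if h : j < nn l then dd l ⟨j, h⟩ else 0),
    (fun l j => if h : j < nn l then ww l ⟨j, h⟩ else 0), ?_⟩
  intro t x hx l
  set q : X := (t, ⟨x, hx⟩) with hq
  have hkey := hnet l q
  have hps : (∑ j ∈ Finset.range m,
        (if h : j < nn l then coef l ⟨j, h⟩ else 0) *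
          σ ((if h : j < nn l then aa l ⟨j, h⟩ else 0) * (t:ℝ)
            + (∑ i, (if h : j < nn l then ww l ⟨j, h⟩ else 0) i * x i)
            + (if h : j < nn l then dd l ⟨j, h⟩ else 0)))
      = ∑ i : Fin (nn l), coef l i * σ (aa l i * (t:ℝ) + (∑ j, ww l i j * x j) + dd l i) := by
    rw [← Finset.sum_subset (Finset.range_subset_range.mpr (hmle l))]
    · rw [Finset.sum_range (fun j => _)]
      apply Finset.sum_congr rfl
      intro i _
      rw [dif_pos i.isLt, dif_pos i.isLt, dif_pos i.isLt, dif_pos i.isLt]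
    · intro j _ hj
      rw [Finset.mem_range] at hj
      push_neg at hj
      rw [dif_neg (not_lt.mpr hj), zero_mul]
  rw [hps]
  exact hkey

lemma coord_le_norm {n : ℕ} (x : EuclideanSpace ℝ (Fin n)) (i : Fin n) : |x i| ≤ ‖x‖ := by
  rw [EuclideanSpace.norm_eq]
  simp only [Real.norm_eq_abs, sq_abs]
  rw [← Real.sqrt_sq_eq_abs]
  exact Real.sqrt_le_sqrt (Finset.single_le_sum (fun j _ => sq_nonneg (x j)) (Finset.mem_univ i))

set_option maxHeartbeats 2000000 in
/-- Universal approximation by a three-layered feed-forward network with time modules: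
`𝒩(t,x) = Q · σ(ψ_{w,2}(t) ⊙ (W₂ · σ(ψ_{w,1}(t) ⊙ (W₁ x) + ψ_{b,1}(t) ⊙ b₁)) + ψ_{b,2}(t) ⊙ b₂)`. -/
theorem three_layer_time_network_universal_approximation
    (σ : ℝ → ℝ) (hσ_cont : Continuous σ)
    (hσ_top : Tendsto σ atTop (nhds 1)) (hσ_bot : Tendsto σ atBot (nhds 0))
    (T : ℝ) (hT : 0 < T) (dx dy : ℕ)
    (f : Set.Icc (0 : ℝ) T → EuclideanSpace ℝ (Fin dx) → EuclideanSpace ℝ (Fin dy))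
    (hf : Continuous fun p : Set.Icc (0 : ℝ) T × EuclideanSpace ℝ (Fin dx) => f p.1 p.2)
    (K : Set (EuclideanSpace ℝ (Fin dx))) (hK : IsCompact K)
    (ε : ℝ) (hε : 0 < ε) :
    ∃ (n₁ n₂ : ℕ)
      (W₁ : Matrix (Fin n₁) (Fin dx) ℝ) (W₂ : Matrix (Fin n₂) (Fin n₁) ℝ)
      (Q : Matrix (Fin dy) (Fin n₂) ℝ)
      (b₁ : Fin n₁ → ℝ) (b₂ : Fin n₂ → ℝ)
      (ψw₁ ψb₁ : Set.Icc (0 : ℝ) T → Fin n₁ → ℝ)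
      (ψw₂ ψb₂ : Set.Icc (0 : ℝ) T → Fin n₂ → ℝ),
      Continuous ψw₁ ∧ Continuous ψb₁ ∧ Continuous ψw₂ ∧ Continuous ψb₂ ∧
      ∀ (t : Set.Icc (0 : ℝ) T), ∀ x ∈ K,
        ‖(WithLp.equiv 2 (Fin dy → ℝ)).symm
            (Q.mulVec (fun j => σ (ψw₂ t j *
              (W₂.mulVec (fun i => σ (ψw₁ t i * (W₁.mulVec (WithLp.equiv 2 (Fin dx → ℝ) x)) i
                + ψb₁ t i * b₁ i))) j
              + ψb₂ t j * b₂ j)))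
          - f t x‖ < ε := by
  set εc : ℝ := ε / (Real.sqrt dy + 1) with hεcdef
  have hsq0 : (0:ℝ) ≤ Real.sqrt dy := Real.sqrt_nonneg _
  have hεc : 0 < εc := by positivity
  obtain ⟨m, c, α, d, w, hnet⟩ := step_multi hσ_cont hσ_top hσ_bot T dx dy f hf K hK
    (εc/2) (by positivity)
  -- coordinate bound on K
  obtain ⟨RK0, hRK0⟩ := IsCompact.exists_bound_of_continuousOn hK continuousOn_id
  set RK : ℝ := max RK0 0 with hRKdef
  have hRKnn : 0 ≤ RK := le_max_right _ _
  have hRK : ∀ x ∈ K, ∀ i, |x i| ≤ RK := by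
    intro x hx i
    calc |x i| ≤ ‖x‖ := coord_le_norm x i
    _ ≤ RK0 := hRK0 x hx
    _ ≤ RK := le_max_left _ _
  set Sw : Fin dy → ℕ → ℝ := fun l j => ∑ i, |w l j i| with hSwdef
  have hSw0 : ∀ l j, 0 ≤ Sw l j := fun l j => Finset.sum_nonneg fun i _ => abs_nonneg _
  set Swmax : ℝ := ∑ l, ∑ j ∈ Finset.range m, Sw l j with hSwmaxdef
  have hSwmax0 : 0 ≤ Swmax :=
    Finset.sum_nonneg fun l _ => Finset.sum_nonneg fun j _ => hSw0 l j
  have hSwle : ∀ l, ∀ j < m, Sw l j ≤ Swmax := by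
    intro l j hj
    calc Sw l j ≤ ∑ j' ∈ Finset.range m, Sw l j' :=
      Finset.single_le_sum (fun j' _ => hSw0 l j') (Finset.mem_range.mpr hj)
    _ ≤ Swmax := Finset.single_le_sum
        (fun l' (_ : l' ∈ Finset.univ) => Finset.sum_nonneg fun j' _ => hSw0 l' j')
        (Finset.mem_univ l)
  set R₂ : ℝ := ∑ l, ∑ j ∈ Finset.range m, (Sw l j * RK + |α l j| * T + |d l j|) with hR₂def
  have hterm_nn : ∀ (l : Fin dy) (j : ℕ), 0 ≤ Sw l j * RK + |α l j| * T + |d l j| := by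
    intro l j
    have := hSw0 l j
    have h1 : 0 ≤ |α l j| * T := mul_nonneg (abs_nonneg _) hT.le
    have h2 : 0 ≤ Sw l j * RK := mul_nonneg (hSw0 l j) hRKnn
    positivity
  have hR₂nn : 0 ≤ R₂ :=
    Finset.sum_nonneg fun l _ => Finset.sum_nonneg fun j _ => hterm_nn l j
  have hR₂each : ∀ (l : Fin dy), ∀ j < m, ∀ (t : Set.Icc (0:ℝ) T), ∀ x ∈ K,
      |α l j * (t:ℝ) + (∑ i, w l j i * x i) + d l j| ≤ R₂ := by
    intro l j hj t x hx
    have h1 : |α l j * (t:ℝ)| ≤ |α l j| * T := by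
      rw [abs_mul]
      apply mul_le_mul_of_nonneg_left _ (abs_nonneg _)
      rw [abs_of_nonneg t.2.1]; exact t.2.2
    have h2 : |∑ i, w l j i * x i| ≤ Sw l j * RK := by
      calc |∑ i, w l j i * x i| ≤ ∑ i, |w l j i * x i| := Finset.abs_sum_le_sum_abs _ _
      _ ≤ ∑ i, |w l j i| * RK := by
          apply Finset.sum_le_sum
          intro i _
          rw [abs_mul]
          exact mul_le_mul_of_nonneg_left (hRK x hx i) (abs_nonneg _)
      _ = Sw l j * RK := by rw [hSwdef, Finset.sum_mul]
    have htri : |α l j * (t:ℝ) + (∑ i, w l j i * x i) + d l j|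
        ≤ |α l j * (t:ℝ)| + |∑ i, w l j i * x i| + |d l j| :=
      le_trans (abs_add_le _ _) (by gcongr; exact abs_add_le _ _)
    have hterm_le : Sw l j * RK + |α l j| * T + |d l j| ≤ R₂ := by
      calc Sw l j * RK + |α l j| * T + |d l j|
          ≤ ∑ j' ∈ Finset.range m, (Sw l j' * RK + |α l j'| * T + |d l j'|) :=
        Finset.single_le_sum (fun j' _ => hterm_nn l j') (Finset.mem_range.mpr hj)
      _ ≤ R₂ := Finset.single_le_sum
          (fun l' (_ : l' ∈ Finset.univ) => Finset.sum_nonneg fun j' _ => hterm_nn l' j')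
          (Finset.mem_univ l)
    linarith
  set Qsum : ℝ := ∑ l, ∑ j ∈ Finset.range m, |c l j| with hQsumdef
  have hQsum0 : 0 ≤ Qsum :=
    Finset.sum_nonneg fun l _ => Finset.sum_nonneg fun j _ => abs_nonneg _
  have hQle : ∀ l : Fin dy, (∑ j ∈ Finset.range m, |c l j|) ≤ Qsum :=
    fun l => Finset.single_le_sum (f := fun l' => ∑ j ∈ Finset.range m, |c l' j|)
      (fun l' (_ : l' ∈ Finset.univ) => Finset.sum_nonneg fun j _ => abs_nonneg _)
      (Finset.mem_univ l)
  set ε₂ : ℝ := εc / (2*(Qsum+1)) with hε₂def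
  have hε₂pos : 0 < ε₂ := by positivity
  -- uniform continuity of σ
  obtain ⟨δ', hδ'pos, hδ'⟩ := Metric.uniformContinuousOn_iff.mp
    ((isCompact_Icc (a := -(R₂+1)) (b := R₂+1)).uniformContinuousOn_of_continuous
      hσ_cont.continuousOn) ε₂ hε₂pos
  set δm : ℝ := min δ' 1 with hδmdef
  have hδmpos : 0 < δm := lt_min hδ'pos one_pos
  have hδm1 : δm ≤ 1 := min_le_right _ _
  have hδmδ' : δm ≤ δ' := min_le_left _ _
  set δ₁ : ℝ := δm / (2*(Swmax+1)) with hδ₁def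
  have hδ₁pos : 0 < δ₁ := by positivity
  -- layer 1 : approximate the identity coordinatewise
  choose n1 c1 w1 d1 hl1 using fun i : Fin dx =>
    step_one_dim hσ_cont hσ_top hσ_bot (fun s => s) continuous_id (-RK) RK δ₁ hδ₁pos
  set N1 : ℕ := Finset.univ.sup n1 with hN1def
  have hN1le : ∀ i, n1 i ≤ N1 := fun i => Finset.le_sup (Finset.mem_univ i)
  set c1' : Fin dx → ℕ → ℝ := fun i k => if k < n1 i then c1 i k else 0 with hc1'def
  have hX1 : ∀ x ∈ K, ∀ i : Fin dx,
      |(∑ k ∈ Finset.range N1, c1' i k * σ (w1 i k * x i + d1 i k)) - x i| < δ₁ := by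
    intro x hx i
    have hre : (∑ k ∈ Finset.range N1, c1' i k * σ (w1 i k * x i + d1 i k))
        = ∑ k ∈ Finset.range (n1 i), c1 i k * σ (w1 i k * x i + d1 i k) := by
      rw [← Finset.sum_subset (Finset.range_subset_range.mpr (hN1le i))]
      · apply Finset.sum_congr rfl
        intro k hk
        rw [Finset.mem_range] at hk
        rw [hc1'def]; simp only [if_pos hk]
      · intro k _ hk
        rw [Finset.mem_range] at hk
        push_neg at hk
        rw [hc1'def]; simp only [if_neg (not_lt.mpr hk), zero_mul]
    rw [hre]
    have hmem : x i ∈ Set.Icc (-RK) RK := by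
      have := hRK x hx i
      rw [abs_le] at this
      exact ⟨this.1, this.2⟩
    exact hl1 i (x i) hmem
  -- assemble the network
  set e₁ := (finProdFinEquiv : Fin dx × Fin N1 ≃ Fin (dx * N1)) with he₁
  set e₂ := (finProdFinEquiv : Fin dy × Fin m ≃ Fin (dy * m)) with he₂
  set W₁mat : Matrix (Fin (dx * N1)) (Fin dx) ℝ :=
    fun r i' => if i' = (e₁.symm r).1 then w1 (e₁.symm r).1 ((e₁.symm r).2 : ℕ) else 0 with hW₁mat
  set W₂mat : Matrix (Fin (dy * m)) (Fin (dx * N1)) ℝ :=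
    fun u r => w (e₂.symm u).1 ((e₂.symm u).2 : ℕ) (e₁.symm r).1
      * c1' (e₁.symm r).1 ((e₁.symm r).2 : ℕ) with hW₂mat
  set Qmat : Matrix (Fin dy) (Fin (dy * m)) ℝ :=
    fun l u => if (e₂.symm u).1 = l then c l ((e₂.symm u).2 : ℕ) else 0 with hQmat
  set b₁v : Fin (dx * N1) → ℝ := fun r => d1 (e₁.symm r).1 ((e₁.symm r).2 : ℕ) with hb₁v
  set ψb₂v : Set.Icc (0:ℝ) T → Fin (dy * m) → ℝ :=
    fun t u => α (e₂.symm u).1 ((e₂.symm u).2 : ℕ) * (t:ℝ)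
      + d (e₂.symm u).1 ((e₂.symm u).2 : ℕ) with hψb₂v
  refine ⟨dx * N1, dy * m, W₁mat, W₂mat, Qmat, b₁v, (fun _ => 1),
    (fun _ _ => 1), (fun _ _ => 1), (fun _ _ => 1), ψb₂v,
    continuous_const, continuous_const, continuous_const, ?_, ?_⟩
  · apply continuous_pi
    intro u
    exact (continuous_const.mul continuous_subtype_val).add continuous_const
  intro t x hx
  set xv : Fin dx → ℝ := WithLp.equiv 2 (Fin dx → ℝ) x with hxv
  have hxv' : ∀ i, xv i = x i := fun i => rfl
  -- hidden layer values
  set Hfun : Fin (dx * N1) → ℝ :=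
    fun r => σ ((1:ℝ) * W₁mat.mulVec xv r + (1:ℝ) * b₁v r) with hHfun
  have hW1 : ∀ r, W₁mat.mulVec xv r
      = w1 (e₁.symm r).1 ((e₁.symm r).2 : ℕ) * x (e₁.symm r).1 := by
    intro r
    simp only [Matrix.mulVec, dotProduct]
    rw [hW₁mat]
    simp only [ite_mul, zero_mul]
    rw [Finset.sum_ite_eq' Finset.univ ((e₁.symm r).1)
      (fun i' => w1 (e₁.symm r).1 ((e₁.symm r).2 : ℕ) * xv i')]
    simp [hxv']
  have hH : ∀ r, Hfun r
      = σ (w1 (e₁.symm r).1 ((e₁.symm r).2 : ℕ) * x (e₁.symm r).1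
          + d1 (e₁.symm r).1 ((e₁.symm r).2 : ℕ)) := by
    intro r
    rw [hHfun]
    simp only [one_mul]
    rw [hW1]
  have hH' : ∀ (i : Fin dx) (k : Fin N1), Hfun (e₁ (i,k)) = σ (w1 i (k:ℕ) * x i + d1 i (k:ℕ)) := by
    intro i k
    rw [hH, Equiv.symm_apply_apply]
  have hW₂' : ∀ (l : Fin dy) (j : Fin m) (i : Fin dx) (k : Fin N1),
      W₂mat (e₂ (l,j)) (e₁ (i,k)) = w l (j:ℕ) i * c1' i (k:ℕ) := by
    intro l j i k
    rw [hW₂mat]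
    beta_reduce
    rw [Equiv.symm_apply_apply, Equiv.symm_apply_apply]
  -- coordinate approximations
  set Xap : Fin dx → ℝ := fun i => ∑ k ∈ Finset.range N1, c1' i k * σ (w1 i k * x i + d1 i k)
    with hXap
  have hXapx : ∀ i, |Xap i - x i| < δ₁ := fun i => hX1 x hx i
  -- second-layer preactivations
  have hWH : ∀ (l : Fin dy) (j : Fin m), W₂mat.mulVec Hfun (e₂ (l, j))
      = ∑ i, w l (j:ℕ) i * Xap i := by
    intro l j
    simp only [Matrix.mulVec, dotProduct]
    rw [← Equiv.sum_comp e₁ (fun r => W₂mat (e₂ (l,j)) r * Hfun r)]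
    rw [Fintype.sum_prod_type]
    apply Finset.sum_congr rfl
    intro i _
    rw [hXap, Finset.mul_sum, ← Fin.sum_univ_eq_sum_range
      (fun k => w l (j:ℕ) i * (c1' i k * σ (w1 i k * x i + d1 i k))) N1]
    apply Finset.sum_congr rfl
    intro k _
    rw [hW₂', hH']
    ring
  -- true and perturbed preactivations
  set pt : Fin dy → ℕ → ℝ :=
    fun l j => α l j * (t:ℝ) + (∑ i, w l j i * x i) + d l j with hpt
  set pp : Fin dy → ℕ → ℝ :=
    fun l j => (∑ i, w l j i * Xap i) + (α l j * (t:ℝ) + d l j) with hpp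
  have hpertb : ∀ (l : Fin dy), ∀ j < m, |pp l j - pt l j| < δm := by
    intro l j hj
    have hdiff : pp l j - pt l j = ∑ i, w l j i * (Xap i - x i) := by
      have h' : ∑ i, w l j i * (Xap i - x i)
          = (∑ i, w l j i * Xap i) - ∑ i, w l j i * x i := by
        rw [← Finset.sum_sub_distrib]
        exact Finset.sum_congr rfl fun i _ => by ring
      rw [h', hpp, hpt]
      ring
    rw [hdiff]
    calc |∑ i, w l j i * (Xap i - x i)| ≤ ∑ i, |w l j i * (Xap i - x i)| :=
      Finset.abs_sum_le_sum_abs _ _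
    _ ≤ ∑ i, |w l j i| * δ₁ := by
        apply Finset.sum_le_sum
        intro i _
        rw [abs_mul]
        exact mul_le_mul_of_nonneg_left (hXapx i).le (abs_nonneg _)
    _ = Sw l j * δ₁ := by rw [hSwdef, Finset.sum_mul]
    _ ≤ Swmax * δ₁ := mul_le_mul_of_nonneg_right (hSwle l j hj) hδ₁pos.le
    _ ≤ δm / 2 := by
        rw [hδ₁def, ← mul_div_assoc, div_le_div_iff₀ (by positivity) (by norm_num : (0:ℝ) < 2)]
        nlinarith [hδmpos.le, hSwmax0]
    _ < δm := by linarith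
  have hσpert : ∀ (l : Fin dy), ∀ j < m, |σ (pp l j) - σ (pt l j)| ≤ ε₂ := by
    intro l j hj
    have hptb : |pt l j| ≤ R₂ := hR₂each l j hj t x hx
    have hppb : |pp l j| ≤ R₂ + 1 := by
      have := hpertb l j hj
      have h' : |pp l j| ≤ |pt l j| + |pp l j - pt l j| := by
        calc |pp l j| = |pt l j + (pp l j - pt l j)| := by congr 1; ring
        _ ≤ |pt l j| + |pp l j - pt l j| := abs_add_le _ _
      linarith [hδm1]
    have hmem1 : pp l j ∈ Set.Icc (-(R₂+1)) (R₂+1) := by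
      rw [Set.mem_Icc, ← abs_le]; exact hppb
    have hmem2 : pt l j ∈ Set.Icc (-(R₂+1)) (R₂+1) := by
      rw [Set.mem_Icc, ← abs_le]; linarith [hptb]
    have := hδ' _ hmem1 _ hmem2 (by
      rw [Real.dist_eq]
      calc |pp l j - pt l j| < δm := hpertb l j hj
      _ ≤ δ' := hδmδ')
    rw [Real.dist_eq] at this
    exact this.le
  -- output layer
  set Gfun : Fin (dy * m) → ℝ :=
    fun u => σ ((1:ℝ) * W₂mat.mulVec Hfun u + ψb₂v t u * 1) with hGfun
  have hG : ∀ (l : Fin dy) (j : Fin m), Gfun (e₂ (l,j)) = σ (pp l (j:ℕ)) := by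
    intro l j
    rw [hGfun]
    simp only [one_mul, mul_one]
    rw [hWH, hψb₂v, hpp]
    simp only [Equiv.symm_apply_apply]
  have hQG : ∀ l : Fin dy, Qmat.mulVec Gfun l = ∑ j : Fin m, c l (j:ℕ) * σ (pp l (j:ℕ)) := by
    intro l
    simp only [Matrix.mulVec, dotProduct]
    rw [← Equiv.sum_comp e₂ (fun u => Qmat l u * Gfun u)]
    rw [Fintype.sum_prod_type]
    have hinner : ∀ l' : Fin dy, (∑ j : Fin m, Qmat l (e₂ (l', j)) * Gfun (e₂ (l', j)))
        = if l' = l then ∑ j : Fin m, c l (j:ℕ) * σ (pp l (j:ℕ)) else 0 := by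
      intro l'
      by_cases h : l' = l
      · subst h
        rw [if_pos rfl]
        apply Finset.sum_congr rfl
        intro j _
        rw [hQmat, hG]
        simp [Equiv.symm_apply_apply]
      · rw [if_neg h]
        apply Finset.sum_eq_zero
        intro j _
        rw [hQmat]
        simp only [Equiv.symm_apply_apply, if_neg h, zero_mul]
    rw [Finset.sum_congr rfl (fun l' _ => hinner l')]
    rw [Finset.sum_ite_eq' Finset.univ l
      (fun _ => ∑ j : Fin m, c l (j:ℕ) * σ (pp l (j:ℕ)))]
    simp
  -- componentwise error
  have hcomp : ∀ l : Fin dy, |Qmat.mulVec Gfun l - f t x l| < εc := by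
    intro l
    rw [hQG]
    have hsplit : (∑ j : Fin m, c l (j:ℕ) * σ (pp l (j:ℕ))) - f t x l
        = (∑ j : Fin m, c l (j:ℕ) * (σ (pp l (j:ℕ)) - σ (pt l (j:ℕ))))
          + ((∑ j : Fin m, c l (j:ℕ) * σ (pt l (j:ℕ))) - f t x l) := by
      have h1 : ∑ j : Fin m, c l (j:ℕ) * (σ (pp l (j:ℕ)) - σ (pt l (j:ℕ)))
          = (∑ j : Fin m, c l (j:ℕ) * σ (pp l (j:ℕ)))
            - ∑ j : Fin m, c l (j:ℕ) * σ (pt l (j:ℕ)) := by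
        rw [← Finset.sum_sub_distrib]
        exact Finset.sum_congr rfl fun j _ => by ring
      rw [h1]
      ring
    rw [hsplit]
    have hB1 : |∑ j : Fin m, c l (j:ℕ) * (σ (pp l (j:ℕ)) - σ (pt l (j:ℕ)))| ≤ Qsum * ε₂ := by
      calc |∑ j : Fin m, c l (j:ℕ) * (σ (pp l (j:ℕ)) - σ (pt l (j:ℕ)))|
          ≤ ∑ j : Fin m, |c l (j:ℕ) * (σ (pp l (j:ℕ)) - σ (pt l (j:ℕ)))| :=
        Finset.abs_sum_le_sum_abs _ _
      _ ≤ ∑ j : Fin m, |c l (j:ℕ)| * ε₂ := by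
          apply Finset.sum_le_sum
          intro j _
          rw [abs_mul]
          exact mul_le_mul_of_nonneg_left (hσpert l (j:ℕ) j.isLt) (abs_nonneg _)
      _ = (∑ j : Fin m, |c l (j:ℕ)|) * ε₂ := by rw [Finset.sum_mul]
      _ = (∑ j ∈ Finset.range m, |c l j|) * ε₂ := by
          rw [Fin.sum_univ_eq_sum_range (fun j => |c l j|) m]
      _ ≤ Qsum * ε₂ := mul_le_mul_of_nonneg_right (hQle l) hε₂pos.le
    have hB2 : |(∑ j : Fin m, c l (j:ℕ) * σ (pt l (j:ℕ))) - f t x l| < εc / 2 := by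
      have := hnet t x hx l
      rw [Fin.sum_univ_eq_sum_range (fun j => c l j * σ (pt l j)) m]
      exact this
    have hQε₂ : Qsum * ε₂ < εc / 2 := by
      rw [hε₂def]
      rw [← mul_div_assoc, div_lt_div_iff₀ (by positivity) (by norm_num : (0:ℝ) < 2)]
      nlinarith
    calc |(∑ j : Fin m, c l (j:ℕ) * (σ (pp l (j:ℕ)) - σ (pt l (j:ℕ))))
        + ((∑ j : Fin m, c l (j:ℕ) * σ (pt l (j:ℕ))) - f t x l)|
        ≤ |∑ j : Fin m, c l (j:ℕ) * (σ (pp l (j:ℕ)) - σ (pt l (j:ℕ)))|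
          + |(∑ j : Fin m, c l (j:ℕ) * σ (pt l (j:ℕ))) - f t x l| := abs_add_le _ _
    _ < Qsum * ε₂ + εc / 2 := by
        apply add_lt_add_of_le_of_lt hB1 hB2
    _ < εc / 2 + εc / 2 := by linarith
    _ = εc := by ring
  -- conclude via the Euclidean norm
  have hnormeq : ‖(WithLp.equiv 2 (Fin dy → ℝ)).symm (Qmat.mulVec Gfun) - f t x‖
      = Real.sqrt (∑ l, |Qmat.mulVec Gfun l - f t x l| ^ 2) := by
    rw [EuclideanSpace.norm_eq]
    congr 1
  rw [hnormeq]
  have hcompsq : ∀ l : Fin dy, |Qmat.mulVec Gfun l - f t x l| ^ 2 ≤ εc ^ 2 := fun l =>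
    pow_le_pow_left₀ (abs_nonneg _) (hcomp l).le 2
  have hsumsq : (∑ l, |Qmat.mulVec Gfun l - f t x l| ^ 2) ≤ (dy : ℝ) * εc ^ 2 := by
    calc (∑ l, |Qmat.mulVec Gfun l - f t x l| ^ 2) ≤ ∑ _l : Fin dy, εc ^ 2 :=
      Finset.sum_le_sum fun l _ => hcompsq l
    _ = (dy : ℝ) * εc ^ 2 := by
        rw [Finset.sum_const, Finset.card_univ, Fintype.card_fin, nsmul_eq_mul]
  calc Real.sqrt (∑ l, |Qmat.mulVec Gfun l - f t x l| ^ 2)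
      ≤ Real.sqrt ((dy:ℝ) * εc ^ 2) := Real.sqrt_le_sqrt hsumsq
  _ = Real.sqrt dy * εc := by
      rw [Real.sqrt_mul (Nat.cast_nonneg dy), Real.sqrt_sq hεc.le]
  _ < ε := by
      rw [hεcdef, ← mul_div_assoc, div_lt_iff₀ (by positivity)]
      nlinarith
end

section
/- Let d_v ∈ ℕ and C, M ≥ 0. Let σ : ℂ^{d_v} → ℂ^{d_v} be Lipschitz with constant C and satisfy σ(0) = 0. Let W ∈ M_{d_v}(ℂ) satisfy ‖W x‖ ≤ √M ‖x‖ for all x ∈ ℂ^{d_v}, and let R : ℤ → M_{d_v}(ℂ) satisfy ‖R(ξ) x‖ ≤ √M ‖x‖ for all ξ ∈ ℤ and x ∈ ℂ^{d_v}. Suppose v, ṽ, w, w̃ ∈ L²(𝕋; ℂ^{d_v}) satisfy ŵ(ξ) = R(ξ) v̂(ξ) and (w̃)^(ξ) = R(ξ) (ṽ)^(ξ) for every ξ ∈ ℤ, and suppose u, ũ ∈ L²(𝕋; ℂ^{d_v}) satisfy u(x) = σ(W v(x) + w(x)) and ũ(x) = σ(W ṽ(x) + w̃(x)) for almost every x ∈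 𝕋. Then ‖ũ − u‖_{L²} ≤ 2 C √M ‖ṽ − v‖_{L²}; i.e., the neural operator layer v ↦ σ(W v + 𝒦 v), where 𝒦 is the Fourier multiplier with symbol R, is Lipschitz on L²(𝕋; ℂ^{d_v}) with constant 2C√M. -/
open MeasureTheory Real
open scoped ENNReal

noncomputable section

/-- Matrix-vector multiplication on `ℂ^{d_v}` with the Euclidean norm. -/
def matVec {dv : ℕ} (A : Matrix (Fin dv) (Fin dv) ℂ) (x : EuclideanSpace ℂ (Fin dv)) :
    EuclideanSpace ℂ (Fin dv) :=
  (WithLp.equiv 2 (Fin dv → ℂ)).symm (A.mulVec (WithLp.equiv 2 (Fin dv → ℂ) x))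


local notation "μ" => @AddCircle.haarAddCircle (2 * π) _

variable {E : Type} [NormedAddCommGroup E] [NormedSpace ℂ E] [CompleteSpace E]

lemma matVec_sub {dv : ℕ} (A : Matrix (Fin dv) (Fin dv) ℂ) (x y : EuclideanSpace ℂ (Fin dv)) :
    matVec A (x - y) = matVec A x - matVec A y := by
  ext i
  show (A.mulVec (x - y)) i = _
  rw [Matrix.mulVec_sub]
  rfl

lemma my_integrable (h : Lp E 2 μ) : Integrable (h : 𝕋 → E) μ :=
  (Lp.memLp h).integrable (by norm_num)

lemma fourierCoeff_congr_ae' {f g : 𝕋 → E} (h : f =ᵐ[μ] g) (n : ℤ) :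
    fourierCoeff f n = fourierCoeff g n :=
  integral_congr_ae (h.mono fun x hx => by simp only [hx])

lemma integrable_fourier_smul {f : 𝕋 → E} (hf : Integrable f μ) (n : ℤ) :
    Integrable (fun t => fourier n t • f t) μ := by
  refine hf.smul_of_top_right (memLp_top_of_bound ?_ 1 ?_)
  · exact (map_continuous (fourier n)).aestronglyMeasurable
  · filter_upwards with x
    calc ‖fourier n x‖ ≤ ‖@fourier (2*π) n‖ := ContinuousMap.norm_coe_le_norm _ _
    _ = 1 := fourier_norm n

lemma fourierCoeff_clm {F : Type} [NormedAddCommGroup F] [NormedSpace ℂ F] [CompleteSpace F]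
    (L : E →L[ℂ] F) {f : 𝕋 → E} (hf : Integrable f μ) (n : ℤ) :
    fourierCoeff (fun t => L (f t)) n = L (fourierCoeff f n) := by
  unfold fourierCoeff
  calc (∫ t : 𝕋, fourier (-n) t • L (f t) ∂μ)
      = ∫ t : 𝕋, L (fourier (-n) t • f t) ∂μ := by simp
    _ = L (∫ t : 𝕋, fourier (-n) t • f t ∂μ) := L.integral_comp_comm (integrable_fourier_smul hf _)

lemma fourierCoeff_Lp_sub (a b : Lp E 2 μ) (n : ℤ) :
    fourierCoeff ((a - b : Lp E 2 μ) : 𝕋 → E) n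
      = fourierCoeff (a : 𝕋 → E) n - fourierCoeff (b : 𝕋 → E) n := by
  rw [fourierCoeff_congr_ae' (Lp.coeFn_sub a b) n]
  unfold fourierCoeff
  simp_rw [Pi.sub_apply, smul_sub]
  exact integral_sub (integrable_fourier_smul (my_integrable a) _)
    (integrable_fourier_smul (my_integrable b) _)

variable {E' : Type} [NormedAddCommGroup E'] [InnerProductSpace ℂ E']

lemma my_integrable_norm_sq (h : Lp E' 2 μ) : Integrable (fun x => ‖h x‖ ^ 2) μ := by
  have H := (L2.integrable_inner (𝕜 := ℂ) h h).re
  refine H.congr (Filter.Eventually.of_forall fun x => ?_)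
  exact (norm_sq_eq_re_inner (𝕜 := ℂ) (h x)).symm

lemma my_norm_sq (h : Lp E' 2 μ) [CompleteSpace E'] :
    ‖h‖ ^ 2 = ∫ x, ‖h x‖ ^ 2 ∂μ := by
  have H₃ := congr_arg RCLike.re (@L2.inner_def 𝕋 E' ℂ _ _ _ _ _ h h)
  rw [← integral_re (L2.integrable_inner h h)] at H₃
  simp only [← norm_sq_eq_re_inner] at H₃
  exact H₃

section comp
variable {dv : ℕ}

/-- coordinate projection as a CLM -/
def Pj (dv : ℕ) (j : Fin dv) : EuclideanSpace ℂ (Fin dv) →L[ℂ] ℂ := EuclideanSpace.proj j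

lemma fourierCoeff_proj (h : Lp (EuclideanSpace ℂ (Fin dv)) 2 μ) (j : Fin dv) (n : ℤ) :
    fourierCoeff (((Pj dv j).compLp h : Lp ℂ 2 μ) : 𝕋 → ℂ) n
      = fourierCoeff (h : 𝕋 → EuclideanSpace ℂ (Fin dv)) n j := by
  rw [fourierCoeff_congr_ae' ((Pj dv j).coeFn_compLp' h) n,
    fourierCoeff_clm (Pj dv j) (my_integrable h) n]
  simp [Pj]

lemma scalar_summable (s : Lp ℂ 2 μ) :
    Summable fun ξ : ℤ => ‖fourierCoeff (s : 𝕋 → ℂ) ξ‖ ^ 2 := by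
  have H := lp.memℓp (fourierBasis.repr s)
  rw [memℓp_gen_iff (by norm_num : 0 < (2 : ℝ≥0∞).toReal)] at H
  have H2 : Summable fun ξ : ℤ => ‖fourierBasis.repr s ξ‖ ^ (2 : ℕ) := by
    refine H.congr fun ξ => ?_
    rw [show ((2:ℝ≥0∞).toReal) = ((2:ℕ):ℝ) by norm_num, Real.rpow_natCast]
  refine H2.congr fun ξ => ?_
  rw [fourierBasis_repr]

lemma scalar_parseval (s : Lp ℂ 2 μ) :
    ‖s‖ ^ 2 = ∑' ξ : ℤ, ‖fourierCoeff (s : 𝕋 → ℂ) ξ‖ ^ 2 := by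
  rw [tsum_sq_fourierCoeff, my_norm_sq]

lemma vec_summable (h : Lp (EuclideanSpace ℂ (Fin dv)) 2 μ) :
    Summable fun ξ : ℤ => ‖fourierCoeff (h : 𝕋 → EuclideanSpace ℂ (Fin dv)) ξ‖ ^ 2 := by
  have key : ∀ ξ : ℤ, ‖fourierCoeff (h : 𝕋 → EuclideanSpace ℂ (Fin dv)) ξ‖ ^ 2
      = ∑ j, ‖fourierCoeff (h : 𝕋 → EuclideanSpace ℂ (Fin dv)) ξ j‖ ^ 2 := fun ξ =>
    PiLp.norm_sq_eq_of_L2 _ _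
  refine Summable.congr (summable_sum fun j _ => ?_) fun ξ => (key ξ).symm
  refine (scalar_summable ((Pj dv j).compLp h)).congr fun ξ => ?_
  rw [fourierCoeff_proj]

lemma vec_parseval (h : Lp (EuclideanSpace ℂ (Fin dv)) 2 μ) :
    ‖h‖ ^ 2 = ∑' ξ : ℤ, ‖fourierCoeff (h : 𝕋 → EuclideanSpace ℂ (Fin dv)) ξ‖ ^ 2 := by
  have hint : ∀ j : Fin dv, Integrable (fun x => ‖h x j‖ ^ 2) μ := by
    intro j
    refine (my_integrable_norm_sq ((Pj dv j).compLp h)).congr ?_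
    filter_upwards [(Pj dv j).coeFn_compLp' h] with x hx
    rw [hx]
    rfl
  calc ‖h‖ ^ 2 = ∫ x, ‖h x‖ ^ 2 ∂μ := my_norm_sq h
    _ = ∫ x, ∑ j, ‖h x j‖ ^ 2 ∂μ := by
        refine integral_congr_ae (Filter.Eventually.of_forall fun x => ?_)
        exact PiLp.norm_sq_eq_of_L2 _ _
    _ = ∑ j, ∫ x, ‖h x j‖ ^ 2 ∂μ := integral_finset_sum _ fun j _ => hint j
    _ = ∑ j, ‖(Pj dv j).compLp h‖ ^ 2 := by
        refine Finset.sum_congr rfl fun j _ => ?_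
        rw [my_norm_sq]
        refine integral_congr_ae ?_
        filter_upwards [(Pj dv j).coeFn_compLp' h] with x hx
        rw [hx]
        rfl
    _ = ∑ j, ∑' ξ : ℤ, ‖fourierCoeff (h : 𝕋 → EuclideanSpace ℂ (Fin dv)) ξ j‖ ^ 2 := by
        refine Finset.sum_congr rfl fun j _ => ?_
        rw [scalar_parseval]
        exact tsum_congr fun ξ => by rw [fourierCoeff_proj]
    _ = ∑' ξ : ℤ, ∑ j, ‖fourierCoeff (h : 𝕋 → EuclideanSpace ℂ (Fin dv)) ξ j‖ ^ 2 := by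
        refine (Summable.tsum_finsetSum fun j _ => ?_).symm
        refine (scalar_summable ((Pj dv j).compLp h)).congr fun ξ => ?_
        rw [fourierCoeff_proj]
    _ = ∑' ξ : ℤ, ‖fourierCoeff (h : 𝕋 → EuclideanSpace ℂ (Fin dv)) ξ‖ ^ 2 :=
        tsum_congr fun ξ => (PiLp.norm_sq_eq_of_L2 _ _).symm

end comp

/-- Stability (Lipschitz bound `2C√M`) of the neural operator layer
`v ↦ σ(W v + 𝒦 v)`, where `𝒦` is the Fourier multiplier with symbol `R`:
if `u = σ(W v + 𝒦 v)` and `u' = σ(W v' + 𝒦 v')` then `‖u' - u‖ ≤ 2C√M ‖v' - v‖`. -/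
theorem neural_operator_layer_stability (dv : ℕ) (C M : ℝ) (hC : 0 ≤ C) (hM : 0 ≤ M)
    (σ : EuclideanSpace ℂ (Fin dv) → EuclideanSpace ℂ (Fin dv))
    (hσ_lip : ∀ x y, ‖σ x - σ y‖ ≤ C * ‖x - y‖) (hσ0 : σ 0 = 0)
    (W : Matrix (Fin dv) (Fin dv) ℂ)
    (hW : ∀ x : EuclideanSpace ℂ (Fin dv), ‖matVec W x‖ ≤ Real.sqrt M * ‖x‖)
    (R : ℤ → Matrix (Fin dv) (Fin dv) ℂ)
    (hR : ∀ (ξ : ℤ) (x : EuclideanSpace ℂ (Fin dv)), ‖matVec (R ξ) x‖ ≤ Real.sqrt M * ‖x‖)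
    (v v' w w' u u' : Lp (EuclideanSpace ℂ (Fin dv)) 2 (@AddCircle.haarAddCircle (2 * π) _))
    (hw : ∀ ξ : ℤ, fourierCoeff (w : 𝕋 → EuclideanSpace ℂ (Fin dv)) ξ
        = matVec (R ξ) (fourierCoeff (v : 𝕋 → EuclideanSpace ℂ (Fin dv)) ξ))
    (hw' : ∀ ξ : ℤ, fourierCoeff (w' : 𝕋 → EuclideanSpace ℂ (Fin dv)) ξ
        = matVec (R ξ) (fourierCoeff (v' : 𝕋 → EuclideanSpace ℂ (Fin dv)) ξ))
    (hu : ∀ᵐ x ∂(@AddCircle.haarAddCircle (2 * π) _), u x = σ (matVec W (v x) + w x))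
    (hu' : ∀ᵐ x ∂(@AddCircle.haarAddCircle (2 * π) _), u' x = σ (matVec W (v' x) + w' x)) :
    ‖u' - u‖ ≤ 2 * C * Real.sqrt M * ‖v' - v‖ := by
  set f := v' - v with hfdef
  set g := w' - w with hgdef
  have hcoeff : ∀ ξ : ℤ, fourierCoeff (g : 𝕋 → EuclideanSpace ℂ (Fin dv)) ξ
      = matVec (R ξ) (fourierCoeff (f : 𝕋 → EuclideanSpace ℂ (Fin dv)) ξ) := by
    intro ξ
    rw [hgdef, hfdef, fourierCoeff_Lp_sub, fourierCoeff_Lp_sub, hw, hw', matVec_sub]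
  -- key Fourier-side estimate
  have hgf : ‖g‖ ≤ Real.sqrt M * ‖f‖ := by
    have h1 : ‖g‖ ^ 2 ≤ M * ‖f‖ ^ 2 := by
      rw [vec_parseval g, vec_parseval f, ← tsum_mul_left]
      refine Summable.tsum_le_tsum ?_ (vec_summable g) ((vec_summable f).mul_left M)
      intro ξ
      rw [hcoeff ξ]
      calc ‖matVec (R ξ) (fourierCoeff (f : 𝕋 → EuclideanSpace ℂ (Fin dv)) ξ)‖ ^ 2
          ≤ (Real.sqrt M * ‖fourierCoeff (f : 𝕋 → EuclideanSpace ℂ (Fin dv)) ξ‖) ^ 2 :=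
            pow_le_pow_left₀ (norm_nonneg _) (hR ξ _) 2
        _ = M * ‖fourierCoeff (f : 𝕋 → EuclideanSpace ℂ (Fin dv)) ξ‖ ^ 2 := by
            rw [mul_pow, Real.sq_sqrt hM]
    calc ‖g‖ = Real.sqrt (‖g‖ ^ 2) := (Real.sqrt_sq (norm_nonneg g)).symm
      _ ≤ Real.sqrt (M * ‖f‖ ^ 2) := Real.sqrt_le_sqrt h1
      _ = Real.sqrt M * ‖f‖ := by
          rw [Real.sqrt_mul hM, Real.sqrt_sq (norm_nonneg f)]
  -- matVec W as a continuous linear map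
  let Wl : EuclideanSpace ℂ (Fin dv) →ₗ[ℂ] EuclideanSpace ℂ (Fin dv) :=
    { toFun := matVec W
      map_add' := fun x y => by
        ext i
        show (W.mulVec (x + y)) i = _
        rw [Matrix.mulVec_add]
        rfl
      map_smul' := fun c x => by
        ext i
        show (W.mulVec (c • x)) i = _
        rw [Matrix.mulVec_smul]
        rfl }
  let Wc : EuclideanSpace ℂ (Fin dv) →L[ℂ] EuclideanSpace ℂ (Fin dv) :=
    Wl.mkContinuous (Real.sqrt M) hW
  have hWf : ‖Wc.compLp f‖ ≤ Real.sqrt M * ‖f‖ := by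
    refine le_trans (ContinuousLinearMap.norm_compLp_le Wc f) ?_
    exact mul_le_mul_of_nonneg_right (Wl.mkContinuous_norm_le (Real.sqrt_nonneg M) hW)
      (norm_nonneg f)
  have hae : ∀ᵐ x ∂(@AddCircle.haarAddCircle (2 * π) _),
      ‖(u' - u : Lp (EuclideanSpace ℂ (Fin dv)) 2 μ) x‖
        ≤ ‖(C • (Wc.compLp f + g) : Lp (EuclideanSpace ℂ (Fin dv)) 2 μ) x‖ := by
    filter_upwards [hu, hu', Lp.coeFn_sub u' u, Lp.coeFn_sub v' v, Lp.coeFn_sub w' w,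
      Lp.coeFn_smul C (Wc.compLp f + g), Lp.coeFn_add (Wc.compLp f) g,
      Wc.coeFn_compLp' f] with x h1 h2 h3 h4 h5 h6 h7 h8
    rw [h3, h6]
    simp only [Pi.sub_apply, Pi.smul_apply, Pi.add_apply]
    rw [h1, h2, h7, Pi.add_apply, h8, hfdef] at *
    rw [h4, h5]
    simp only [Pi.sub_apply]
    have hWcx : Wc ((v' : 𝕋 → EuclideanSpace ℂ (Fin dv)) x - (v : 𝕋 → EuclideanSpace ℂ (Fin dv)) x)
        = matVec W ((v' : 𝕋 → EuclideanSpace ℂ (Fin dv)) x)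
          - matVec W ((v : 𝕋 → EuclideanSpace ℂ (Fin dv)) x) := matVec_sub W _ _
    rw [hWcx]
    calc ‖σ (matVec W (v' x) + w' x) - σ (matVec W (v x) + w x)‖
        ≤ C * ‖(matVec W (v' x) + w' x) - (matVec W (v x) + w x)‖ := hσ_lip _ _
      _ = C * ‖(matVec W (v' x) - matVec W (v x)) + (w' x - w x)‖ := by
          rw [add_sub_add_comm]
      _ = ‖C • ((matVec W (v' x) - matVec W (v x)) + (w' x - w x))‖ := by
          rw [norm_smul, Real.norm_of_nonneg hC]
  calc ‖u' - u‖ ≤ ‖(C • (Wc.compLp f + g) : Lp (EuclideanSpace ℂ (Fin dv)) 2 μ)‖ :=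
        Lp.norm_le_norm_of_ae_le hae
    _ = C * ‖Wc.compLp f + g‖ := by rw [norm_smul, Real.norm_of_nonneg hC]
    _ ≤ C * (‖Wc.compLp f‖ + ‖g‖) := mul_le_mul_of_nonneg_left (norm_add_le _ _) hC
    _ ≤ C * (Real.sqrt M * ‖f‖ + Real.sqrt M * ‖f‖) :=
        mul_le_mul_of_nonneg_left (add_le_add hWf hgf) hC
    _ = 2 * C * Real.sqrt M * ‖f‖ := by ring
end
end

section
/- Let T > 0, let G : L²(𝕋;ℂ) → C([0,T]; L²(𝕋;ℂ)) be a continuous operator, let K ⊆ L²(𝕋;ℂ) be a compact subset, and let ε > 0. Then there exist N ∈ ℕ and a continuous map g : [0,T] × ℂ^{{−N,…,N}} → ℂ^{{−N,…,N}} such that for all a ∈ K and all t ∈ [0,T], ‖G(a)(t) − Σ_{|ξ|≤N} g(t, (â(n))_{|n|≤N})(ξ) · e_ξ‖_{L²} < ε; i.e., G is uniformly approximated on K by the composition of the Fourier coefficient map onto modes {−N,…,N}, a continuous time-dependent finite-dimensional map, and the inverse Fourier synthesis. -/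
open MeasureTheory Real

noncomputable section

namespace OpApprox

/-- Partial Fourier sum over a finset of modes. -/
def P (s : Finset ℤ) (x : L2T) : L2T :=
  ∑ i ∈ s, fourierBasis.repr x i • fourierLp 2 i

lemma orthonormal_fourierLp : Orthonormal ℂ (@fourierLp (2 * π) _ 2 _) := by
  rw [← coe_fourierBasis]; exact fourierBasis.orthonormal

lemma repr_eq_inner (x : L2T) (i : ℤ) :
    fourierBasis.repr x i = inner (𝕜 := ℂ) (fourierLp 2 i) x := by
  rw [fourierBasis.repr_apply_apply, coe_fourierBasis]

lemma norm_P_le (s : Finset ℤ) (x : L2T) : ‖P s x‖ ≤ ‖x‖ := by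
  have hsq : ‖P s x‖ ^ 2 = ∑ i ∈ s, ‖fourierBasis.repr x i‖ ^ 2 := by
    have h := orthonormal_fourierLp.inner_sum
      (fun i => fourierBasis.repr x i) (fun i => fourierBasis.repr x i) s
    rw [← inner_self_eq_norm_sq (𝕜 := ℂ), P, h]
    simp [RCLike.conj_mul, ← Complex.ofReal_pow, Complex.ofReal_re]
  have hb : ∑ i ∈ s, ‖fourierBasis.repr x i‖ ^ 2 ≤ ‖x‖ ^ 2 := by
    simp_rw [repr_eq_inner]
    exact orthonormal_fourierLp.sum_inner_products_le x
  have : ‖P s x‖ ^ 2 ≤ ‖x‖ ^ 2 := hsq ▸ hb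
  exact (pow_le_pow_iff_left₀ (norm_nonneg _) (norm_nonneg _) two_ne_zero).mp this

lemma P_sub (s : Finset ℤ) (x y : L2T) : P s x - P s y = P s (x - y) := by
  simp only [P, ← Finset.sum_sub_distrib, ← sub_smul, map_sub]
  simp

lemma lipschitz_P (s : Finset ℤ) (x y : L2T) : ‖P s x - P s y‖ ≤ ‖x - y‖ := by
  rw [P_sub]; exact norm_P_le s (x - y)

/-- Each `x` is the limit of its partial Fourier sums (finset filter version). -/
lemma tendsto_P (x : L2T) :
    Filter.Tendsto (fun s : Finset ℤ => P s x) Filter.atTop (nhds x) := by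
  have h := hasSum_fourier_series_L2 x
  simp_rw [← fourierBasis_repr] at h
  exact h

/-- Uniform convergence of partial Fourier sums on a compact set. -/
lemma uniform_P (C : Set L2T) (hC : IsCompact C) {η : ℝ} (hη : 0 < η) :
    ∃ s₀ : Finset ℤ, ∀ s : Finset ℤ, s₀ ⊆ s → ∀ x ∈ C, ‖x - P s x‖ < η := by
  obtain ⟨t, htK, htfin, htC⟩ := hC.elim_finite_subcover_image
    (fun c (_ : c ∈ C) => Metric.isOpen_ball (x := c) (ε := η / 3))
    (fun x hx => Set.mem_biUnion hx (by simp [Metric.mem_ball, hη]))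
  choose! s₀ hs₀ using fun c : L2T => Filter.eventually_atTop.mp
    (Metric.tendsto_nhds.mp (tendsto_P c) (η / 3) (by linarith))
  refine ⟨htfin.toFinset.sup (fun c => s₀ c), fun s hs x hx => ?_⟩
  obtain ⟨c, hc, hxc⟩ := Set.mem_iUnion₂.mp (htC hx)
  have hsc : s₀ c ⊆ s := le_trans (Finset.le_sup (by simpa using hc)) hs
  have h1 : ‖c - P s c‖ < η / 3 := by
    have := hs₀ c s (Finset.le_iff_subset.mpr hsc)
    rwa [dist_eq_norm, norm_sub_rev] at this
  have h2 : ‖x - c‖ < η / 3 := by rwa [Metric.mem_ball, dist_eq_norm] at hxc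
  have h3 : ‖P s c - P s x‖ < η / 3 := lt_of_le_of_lt (lipschitz_P s c x)
    (by rwa [norm_sub_rev] at h2)
  calc ‖x - P s x‖ = ‖(x - c) + (c - P s c) + (P s c - P s x)‖ := by congr 1; abel
    _ ≤ ‖(x - c) + (c - P s c)‖ + ‖P s c - P s x‖ := norm_add_le _ _
    _ ≤ ‖x - c‖ + ‖c - P s c‖ + ‖P s c - P s x‖ :=
        add_le_add (norm_add_le _ _) le_rfl
    _ < η / 3 + η / 3 + η / 3 := by gcongr
    _ = η := by ring

/-- `P s x` as a sum over `s.attach` of inner products. -/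
lemma P_eq_sum_inner (s : Finset ℤ) (x : L2T) :
    ∑ ξ ∈ s.attach, (inner (𝕜 := ℂ) (fourierLp 2 (ξ : ℤ)) x) • fourierLp 2 (ξ : ℤ) = P s x := by
  rw [P, ← Finset.sum_attach s (fun i => fourierBasis.repr x i • fourierLp 2 i)]
  exact Finset.sum_congr rfl fun n _ => by rw [repr_eq_inner]

/-- `P s x` as a sum over `s.attach` of Fourier coefficients. -/
lemma P_eq_sum_coeff (s : Finset ℤ) (x : L2T) :
    ∑ n ∈ s.attach, fourierCoeff (x : 𝕋 → ℂ) ((n : ℤ)) • fourierLp 2 (n : ℤ) = P s x := by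
  rw [P, ← Finset.sum_attach s (fun i => fourierBasis.repr x i • fourierLp 2 i)]
  exact Finset.sum_congr rfl fun n _ => by rw [fourierBasis_repr]

end OpApprox

set_option synthInstance.maxHeartbeats 1000000 in
instance locallyCompactPair_Icc_L2T (T : ℝ) :
    LocallyCompactPair (Set.Icc (0 : ℝ) T) L2T := inferInstance

/-- Uniform approximation of a continuous operator `G : L²(𝕋;ℂ) → C([0,T]; L²(𝕋;ℂ))` by the
composition of the Fourier coefficient map onto the modes `{-N, …, N}`, a continuous
time-dependent finite-dimensional map `g`, and the inverse Fourier synthesis. -/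
theorem operator_approx_by_finite_fourier_modes (T : ℝ) (hT : 0 < T)
    (G : L2T → C(Set.Icc (0 : ℝ) T, L2T)) (hG : Continuous G)
    (K : Set L2T) (hK : IsCompact K) (ε : ℝ) (hε : 0 < ε) :
    ∃ (N : ℕ) (g : Set.Icc (0 : ℝ) T × ((Finset.Icc (-(N : ℤ)) (N : ℤ)) → ℂ) →
        ((Finset.Icc (-(N : ℤ)) (N : ℤ)) → ℂ)),
      Continuous g ∧
      ∀ a ∈ K, ∀ t : Set.Icc (0 : ℝ) T,
        ‖G a t - ∑ ξ ∈ (Finset.Icc (-(N : ℤ)) (N : ℤ)).attach,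
            g (t, fun n => fourierCoeff (a : 𝕋 → ℂ) (n : ℤ)) ξ • fourierLp 2 (ξ : ℤ)‖ < ε := by
  classical
  -- uniform continuity of G at the compact set K
  have hr : {p : C(Set.Icc (0:ℝ) T, L2T) × C(Set.Icc (0:ℝ) T, L2T) | dist p.1 p.2 < ε/4}
      ∈ uniformity (C(Set.Icc (0:ℝ) T, L2T)) := Metric.dist_mem_uniformity (by linarith)
  have hmem := hK.uniformContinuousAt_of_continuousAt G (fun a _ => hG.continuousAt) hr
  obtain ⟨δ, hδpos, hδ⟩ := Metric.mem_uniformity_dist.mp hmem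
  -- the compact set of all values G a t
  set Cset : Set L2T :=
    (fun p : L2T × (Set.Icc (0:ℝ) T) => G p.1 p.2) '' (K ×ˢ Set.univ) with hCset
  have hcont : Continuous fun p : L2T × (Set.Icc (0:ℝ) T) => G p.1 p.2 :=
    (hG.comp continuous_fst).eval continuous_snd
  have hCc : IsCompact Cset := (hK.prod isCompact_univ).image hcont
  obtain ⟨s₁, hs₁⟩ := OpApprox.uniform_P K hK hδpos
  obtain ⟨s₂, hs₂⟩ := OpApprox.uniform_P Cset hCc (show (0:ℝ) < ε/4 by linarith)
  -- choose N
  set N : ℕ := (s₁ ∪ s₂).sup (fun i => i.natAbs) with hN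
  set s : Finset ℤ := Finset.Icc (-(N : ℤ)) (N : ℤ) with hsdef
  have hsub : s₁ ∪ s₂ ⊆ s := by
    intro i hi
    have h : i.natAbs ≤ N := Finset.le_sup (f := fun i : ℤ => i.natAbs) hi
    simp only [hsdef, Finset.mem_Icc]
    omega
  have hsub1 : s₁ ⊆ s := (Finset.subset_union_left).trans hsub
  have hsub2 : s₂ ⊆ s := (Finset.subset_union_right).trans hsub
  refine ⟨N, fun p ξ => inner (𝕜 := ℂ) (fourierLp 2 (ξ : ℤ))
      (G (∑ n ∈ s.attach, p.2 n • fourierLp 2 (n : ℤ)) p.1), ?_, ?_⟩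
  · refine continuous_pi fun ξ => ?_
    have hS : Continuous fun p : Set.Icc (0:ℝ) T × ((Finset.Icc (-(N : ℤ)) (N : ℤ)) → ℂ) =>
        (∑ n ∈ s.attach, p.2 n • fourierLp 2 (n : ℤ) : L2T) :=
      continuous_finset_sum _ fun n _ =>
        ((continuous_apply n).comp continuous_snd).smul continuous_const
    exact (innerSL ℂ (fourierLp 2 (ξ : ℤ))).continuous.comp
      ((hG.comp hS).eval continuous_fst)
  · intro a ha t
    have hPa := OpApprox.P_eq_sum_coeff s a
    have hsum : (∑ ξ ∈ s.attach, (inner (𝕜 := ℂ) (fourierLp 2 (ξ : ℤ))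
          (G (∑ n ∈ s.attach, fourierCoeff (a : 𝕋 → ℂ) ((n : ℤ)) • fourierLp 2 (n : ℤ)) t))
          • fourierLp 2 (ξ : ℤ))
        = OpApprox.P s (G (OpApprox.P s a) t) := by
      rw [hPa]
      exact OpApprox.P_eq_sum_inner s _
    rw [hsum]
    set w : L2T := G a t with hw
    set u : L2T := G (OpApprox.P s a) t with hu
    have hwC : w ∈ Cset := ⟨(a, t), ⟨ha, trivial⟩, rfl⟩
    have h1 : ‖w - OpApprox.P s w‖ < ε/4 := hs₂ s hsub2 w hwC
    have h4 : dist (G a) (G (OpApprox.P s a)) < ε/4 :=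
      hδ (by rw [dist_eq_norm]; exact hs₁ s hsub1 a ha) ha
    have h3 : ‖w - u‖ ≤ dist (G a) (G (OpApprox.P s a)) := by
      rw [← dist_eq_norm]
      exact ContinuousMap.dist_apply_le_dist t
    have h2 : ‖OpApprox.P s w - OpApprox.P s u‖ ≤ ‖w - u‖ := OpApprox.lipschitz_P s w u
    calc ‖w - OpApprox.P s u‖
        = ‖(w - OpApprox.P s w) + (OpApprox.P s w - OpApprox.P s u)‖ := by congr 1; abel
      _ ≤ ‖w - OpApprox.P s w‖ + ‖OpApprox.P s w - OpApprox.P s u‖ := norm_add_le _ _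
      _ < ε/4 + ε/4 := by
          have := h2.trans (h3.trans h4.le)
          -- need strict; combine
          exact add_lt_add_of_lt_of_le h1 this
      _ ≤ ε := by linarith
end
end
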